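/- arXiv:math/0405479 — 6 statements merged into one kernel-verified Lean document; each statement's English description precedes it below -/
import Mathlib

section
/- The number of permutations of [n] with exactly d cyclic descents equals n times the number of permutations of [n-1] with exactly d-1 (ordinary) descents. Equivalently, the cyclic Eulerian polynomial satisfies A_n^{(c)}(t) = n·A_{n-1}(t). -/
open Finset
open scoped Classical

/-- The value `π(s)` (0-indexed) of a permutation of `Fin n`, as a natural number. -/
def aval (n : ℕ) (π : Equiv.Perm (Fin n)) (s : ℕ) : ℕ :=
  if h : s < n then (π ⟨s, h⟩ : ℕ) else s

/-- The descent set of `π ∈ S_n` (0-indexed positions `s` with `π(s) > π(s+1)`). -/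
def desSetA (n : ℕ) (π : Equiv.Perm (Fin n)) : Finset ℕ :=
  (Finset.range (n - 1)).filter (fun s => aval n π (s + 1) < aval n π s)

/-- The descent number of `π ∈ S_n`. -/
def desA (n : ℕ) (π : Equiv.Perm (Fin n)) : ℕ := (desSetA n π).card

/-- The cyclic descent number of `π ∈ S_n`: ordinary descents together with a
descent in the last position when `π(n) > π(1)` (0-indexed: `π(n-1) > π(0)`). -/
def cdesA (n : ℕ) (π : Equiv.Perm (Fin n)) : ℕ :=
  desA n π + (if aval n π 0 < aval n π (n - 1) then 1 else 0)

/-! Cyclic descents are invariant under rotating positions. Every permutation of `[n]` is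
uniquely a rotation of a word `σ(1) ⋯ σ(n-1) n` with `σ ∈ S_{n-1}`, and such a word has
`des σ + 1` cyclic descents: those of `σ`, plus the one wrapping around from `n` to `σ(1)`.
The `n` rotations give the factor `n`. -/

theorem Fin.card_filter_univ_castSucc {n : ℕ} (p : Fin (n + 1) → Prop) [DecidablePred p] :
    #{x | p x} = #{x : Fin n | p x.castSucc} + if p (Fin.last n) then 1 else 0 := by
  simp only [card_filter, Fin.sum_univ_castSucc]

open Equiv

section

variable {m : ℕ}

def cyclicDes (π : Perm (Fin (m + 1))) : ℕ := #{i | π (i + 1) < π i}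

theorem cyclicDes_eq (π : Perm (Fin (m + 1))) :
    cyclicDes π =
      #{i : Fin m | π i.succ < π i.castSucc} + if π 0 < π (Fin.last m) then 1 else 0 := by
  rw [cyclicDes, Fin.card_filter_univ_castSucc]
  simp only [Fin.coeSucc_eq_succ, Fin.last_add_one]

theorem desA_succ (π : Perm (Fin (m + 1))) :
    desA (m + 1) π = #{i : Fin m | π i.succ < π i.castSucc} := by
  rw [desA, desSetA, Nat.add_sub_cancel, card_filter, card_filter, ← Fin.sum_univ_eq_sum_range]
  refine sum_congr rfl fun i _ => ?_
  simp only [aval, dif_pos (Nat.succ_lt_succ i.isLt), dif_pos (Nat.lt_succ_of_lt i.isLt),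
    Fin.lt_def]
  rfl

theorem cdesA_succ (π : Perm (Fin (m + 1))) : cdesA (m + 1) π = cyclicDes π := by
  rw [cdesA, desA_succ, cyclicDes_eq, Nat.add_sub_cancel]
  simp only [aval, dif_pos m.succ_pos, dif_pos m.lt_succ_self, Fin.lt_def]
  rfl

theorem cyclicDes_addRight_trans (π : Perm (Fin (m + 1))) (k : Fin (m + 1)) :
    cyclicDes ((Equiv.addRight k).trans π) = cyclicDes π := by
  simp only [cyclicDes, card_filter, trans_apply, coe_addRight, add_right_comm _ (1 : Fin (m + 1))]
  exact Equiv.sum_comp (Equiv.addRight k) fun j => if π (j + 1) < π j then 1 else 0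

def extendLast (σ : Perm (Fin m)) : Perm (Fin (m + 1)) :=
  finSuccEquivLast.permCongr.symm σ.optionCongr

@[simp]
theorem extendLast_castSucc (σ : Perm (Fin m)) (j : Fin m) :
    extendLast σ j.castSucc = (σ j).castSucc := by
  simp [extendLast, permCongr]

@[simp]
theorem extendLast_last (σ : Perm (Fin m)) : extendLast σ (Fin.last m) = Fin.last m := by
  simp [extendLast, permCongr]

theorem cyclicDes_extendLast (σ : Perm (Fin (m + 1))) :
    cyclicDes (extendLast σ) = desA (m + 1) σ + 1 := by
  have h0 : (0 : Fin (m + 2)) = (0 : Fin (m + 1)).castSucc := rfl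
  rw [cyclicDes_eq, Fin.card_filter_univ_castSucc, desA_succ, h0]
  simp only [← Fin.castSucc_succ, Fin.succ_last, extendLast_castSucc, extendLast_last,
    Fin.castSucc_lt_castSucc_iff, Fin.castSucc_lt_last, (Fin.castSucc_lt_last _).not_gt,
    if_true, if_false, add_zero]

def rotateExtend (p : Fin (m + 1) × Perm (Fin m)) : Perm (Fin (m + 1)) :=
  (Equiv.addRight p.1).trans (extendLast p.2)

theorem rotateExtend_injective : Function.Injective (rotateExtend (m := m)) := by
  rintro ⟨k, σ⟩ ⟨k', σ'⟩ h
  have happ (i : Fin (m + 1)) : extendLast σ (i + k) = extendLast σ' (i + k') :=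
    congrArg (· i) h
  obtain rfl : k = k' := by
    have h : Fin.last m - k + k' = Fin.last m - k + k := by
      apply (extendLast σ').injective
      rw [← happ, sub_add_cancel, extendLast_last, extendLast_last]
    exact (add_left_cancel h).symm
  have hσ (j : Fin m) : σ j = σ' j := by
    simpa using happ (j.castSucc - k)
  simp [Equiv.ext hσ]

noncomputable def rotateExtendEquiv : Fin (m + 1) × Perm (Fin m) ≃ Perm (Fin (m + 1)) :=
  Equiv.ofBijective rotateExtend <| (Fintype.bijective_iff_injective_and_card _).mpr
    ⟨rotateExtend_injective, by simp [Fintype.card_perm, Nat.factorial_succ]⟩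

end

/-- The number of permutations of `[n]` with exactly `d` cyclic descents equals
`n` times the number of permutations of `[n-1]` with exactly `d-1` ordinary descents,
i.e. the cyclic Eulerian polynomial satisfies `A_n^{(c)}(t) = n * A_{n-1}(t)`. -/
theorem cyclic_eulerian (n : ℕ) (hn : 2 ≤ n) (d : ℕ) :
    (Finset.univ.filter (fun π : Equiv.Perm (Fin n) => cdesA n π = d)).card
      = n * (Finset.univ.filter
          (fun π : Equiv.Perm (Fin (n - 1)) => desA (n - 1) π + 1 = d)).card := by
  obtain ⟨m, rfl⟩ : ∃ m, n = m + 2 := ⟨n - 2, by omega⟩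
  have hdes (p : Fin (m + 2) × Perm (Fin (m + 1))) :
      cdesA (m + 2) (rotateExtendEquiv p) = desA (m + 1) p.2 + 1 := by
    rw [cdesA_succ, rotateExtendEquiv, ofBijective_apply, rotateExtend, cyclicDes_addRight_trans,
      cyclicDes_extendLast]
  calc #{π : Perm (Fin (m + 2)) | cdesA (m + 2) π = d}
      = #{p : Fin (m + 2) × Perm (Fin (m + 1)) | desA (m + 1) p.2 + 1 = d} :=
        (card_equiv rotateExtendEquiv (by simp [hdes])).symm
    _ = (m + 2) * #{σ : Perm (Fin (m + 1)) | desA (m + 1) σ + 1 = d} := by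
        rw [← univ_product_univ, filter_product_right fun σ => desA (m + 1) σ + 1 = d,
          card_product, card_univ, Fintype.card_fin]
end

section
/- For any permutation π ∈ S_n and any i with 0 ≤ i ≤ n-1, the permutations π∘ω^i and ω^i∘π have the same cyclic descent number as π, where ω is the n-cycle (1 2 ⋯ n). -/
open Finset
open scoped Classical

/-!
Right multiplication by `ω` shifts positions cyclically, so it merely relabels the cyclic
descents. Left multiplication by `ω` adds `1` to every value modulo `n`; this preserves every
comparison not involving the top value `n - 1`, which wraps to `0`. If `t = π⁻¹(n - 1)`, then
`t` is a cyclic descent of `π` and `t - 1` is not, and for `ω ∘ π` it is the other way round, so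
the number of cyclic descents is unchanged.
-/

section CyclicDescents

open Equiv

variable {n : ℕ}

def cyclicDescents (π : Perm (Fin (n + 1))) : Finset (Fin (n + 1)) :=
  univ.filter fun s => π (s + 1) < π s

@[simp]
lemma mem_cyclicDescents {π : Perm (Fin (n + 1))} {s : Fin (n + 1)} :
    s ∈ cyclicDescents π ↔ π (s + 1) < π s := by
  simp [cyclicDescents]

lemma aval_val (π : Perm (Fin n)) (s : Fin n) : aval n π s = π s := by
  simp [aval]

theorem cdesA_eq_card_cyclicDescents (π : Perm (Fin (n + 1))) :
    cdesA (n + 1) π = #(cyclicDescents π) := by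
  have hdes : desA (n + 1) π = ∑ i : Fin n, if π i.succ < π i.castSucc then 1 else 0 := by
    rw [desA, desSetA, card_filter, Nat.add_sub_cancel, ← Fin.sum_univ_eq_sum_range]
    refine sum_congr rfl fun i _ => ?_
    change ite (aval (n + 1) π i.succ < aval (n + 1) π i.castSucc) 1 0 = _
    simp only [aval_val, Fin.val_fin_lt]
  have hwrap : aval (n + 1) π 0 < aval (n + 1) π (n + 1 - 1) ↔
      π (Fin.last n + 1) < π (Fin.last n) := by
    change aval (n + 1) π (0 : Fin (n + 1)) < aval (n + 1) π (Fin.last n) ↔ _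
    rw [Fin.last_add_one, aval_val, aval_val, Fin.val_fin_lt]
  rw [cdesA, hdes, cyclicDescents, card_filter, Fin.sum_univ_castSucc]
  simp only [Fin.coeSucc_eq_succ, hwrap]

theorem card_cyclicDescents_mul_finRotate (π : Perm (Fin (n + 1))) :
    #(cyclicDescents (π * finRotate (n + 1))) = #(cyclicDescents π) :=
  card_equiv (Equiv.addRight 1) fun _ => by simp

lemma finRotate_lt_finRotate_iff {a b : Fin (n + 1)} (ha : a ≠ Fin.last n) (hb : b ≠ Fin.last n) :
    finRotate (n + 1) a < finRotate (n + 1) b ↔ a < b := by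
  rw [Fin.lt_def, coe_finRotate_of_ne_last ha, coe_finRotate_of_ne_last hb,
    Fin.lt_def, Nat.add_lt_add_iff_right]

theorem mem_cyclicDescents_finRotate_mul (π : Perm (Fin (n + 2))) (s : Fin (n + 2)) :
    s ∈ cyclicDescents (finRotate (n + 2) * π) ↔
      s + 1 = π.symm (Fin.last _) ∨ (s ∈ cyclicDescents π ∧ s ≠ π.symm (Fin.last _)) := by
  have hne : ∀ {a}, a ≠ π.symm (Fin.last _) → π a ≠ Fin.last _ := fun h h' =>
    h (π.eq_symm_apply.mpr h')
  rw [mem_cyclicDescents, mem_cyclicDescents, Perm.mul_apply, Perm.mul_apply]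
  by_cases hs : s = π.symm (Fin.last _)
  · rw [hs, π.apply_symm_apply, finRotate_last]
    simp
  by_cases hs1 : s + 1 = π.symm (Fin.last _)
  · rw [hs1, π.apply_symm_apply, finRotate_last]
    simp only [true_or, iff_true]
    exact (Fin.zero_le _).trans_lt ((lt_finRotate_iff_ne_last _).mpr (hne hs))
  · rw [finRotate_lt_finRotate_iff (hne hs1) (hne hs)]
    simp only [hs, hs1, false_or, ne_eq, not_false_eq_true, and_true]

theorem card_cyclicDescents_finRotate_mul (π : Perm (Fin (n + 1))) :
    #(cyclicDescents (finRotate (n + 1) * π)) = #(cyclicDescents π) := by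
  cases n with
  | zero => rw [Subsingleton.elim (finRotate 1 * π) π]
  | succ n =>
    set t := π.symm (Fin.last _)
    have hsucc : t + 1 ≠ t := fun h => one_ne_zero (add_eq_left.mp h)
    have ht : t ∈ cyclicDescents π := by
      rw [mem_cyclicDescents, π.apply_symm_apply, Fin.lt_last_iff_ne_last, Ne,
        ← π.eq_symm_apply]
      exact hsucc
    have hpred_notMem : t - 1 ∉ (cyclicDescents π).erase t := by
      rw [mem_erase, mem_cyclicDescents, sub_add_cancel, π.apply_symm_apply]
      exact fun h => (Fin.le_last _).not_gt h.2
    have hD :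
        cyclicDescents (finRotate (n + 2) * π) = insert (t - 1) ((cyclicDescents π).erase t) := by
      ext s
      rw [mem_cyclicDescents_finRotate_mul, mem_insert, mem_erase, eq_sub_iff_add_eq, and_comm]
    rw [hD, card_insert_of_notMem hpred_notMem, card_erase_add_one ht]

end CyclicDescents

theorem cdes_rotate_general (n : ℕ) (π : Equiv.Perm (Fin n)) (i : ℕ) :
    cdesA n (π * (finRotate n) ^ i) = cdesA n π ∧
    cdesA n ((finRotate n) ^ i * π) = cdesA n π := by
  cases n with
  | zero => exact ⟨by rw [Subsingleton.elim (π * _) π], by rw [Subsingleton.elim (_ * π) π]⟩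
  | succ n =>
    simp only [cdesA_eq_card_cyclicDescents]
    induction i with
    | zero => simp
    | succ i ih =>
      constructor
      · rw [pow_succ, ← mul_assoc, card_cyclicDescents_mul_finRotate, ih.1]
      · rw [pow_succ', mul_assoc, card_cyclicDescents_finRotate_mul, ih.2]

/-- For `0 ≤ i ≤ n-1`, both `π ∘ ω^i` and `ω^i ∘ π` have the same cyclic descent
number as `π`, where `ω` is the `n`-cycle `(1 2 ⋯ n)`. -/
theorem cdes_rotate (n : ℕ) (π : Equiv.Perm (Fin n)) (i : ℕ) (hi : i ≤ n - 1) :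
    cdesA n (π * (finRotate n) ^ i) = cdesA n π ∧
    cdesA n ((finRotate n) ^ i * π) = cdesA n π :=
  cdes_rotate_general n π i
end

section
/- For any finite poset P on [n], the set of P-partitions is the disjoint union over all linear extensions π of P of the sets of π-partitions (the fundamental theorem of P-partitions). -/
open Finset
open scoped Classical

/-- `f` is a `P`-partition for the partial order `r` on `Fin n`:
`f i ≤ f j` whenever `i <_P j`, with strict inequality when moreover `j < i` in `ℤ`. -/
def IsPPart {n : ℕ} {X : Type*} [LinearOrder X] (r : Fin n → Fin n → Prop)
    (f : Fin n → X) : Prop :=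
  ∀ i j, r i j → i ≠ j → f i ≤ f j ∧ (j < i → f i < f j)

/-- `σ` (viewed as the total order `σ(1) < σ(2) < ⋯ < σ(n)`) is a linear extension
of the partial order `r`. -/
def IsLinExt {n : ℕ} (r : Fin n → Fin n → Prop) (σ : Equiv.Perm (Fin n)) : Prop :=
  ∀ i j, r i j → σ⁻¹ i ≤ σ⁻¹ j

/-! Every `f : Fin n → X` is a `σ`-partition for exactly one permutation `σ`: the one listing
`Fin n` in increasing lexicographic order of the pairs `(f i, i)`, i.e. `Tuple.sort f`. If `f` is a
`P`-partition, this `σ` extends `P`, because placing `j` before `i` for some `i <_P j` would impose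
on `f` the `P`-partition inequalities for the pair in both directions. Conversely, a `σ`-partition
for a linear extension `σ` of `P` is a `P`-partition, since `P` imposes fewer conditions. -/

section

variable {n : ℕ} {X : Type*} [LinearOrder X]

theorem isPPart_perm_iff_eq_sort (f : Fin n → X) (σ : Equiv.Perm (Fin n)) :
    IsPPart (fun a b => σ⁻¹ a ≤ σ⁻¹ b) f ↔ σ = Tuple.sort f := by
  rw [Tuple.eq_sort_iff, monotone_iff_forall_lt]
  constructor
  · intro h
    have hlt : ∀ i j, i < j → f (σ i) ≤ f (σ j) ∧ (σ j < σ i → f (σ i) < f (σ j)) :=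
      fun i j hij => h (σ i) (σ j) (by simpa using hij.le) (σ.injective.ne hij.ne)
    refine ⟨fun i j hij => (hlt i j hij).1, fun i j hij heq => ?_⟩
    refine lt_of_not_ge fun hge => ?_
    exact ((hlt i j hij).2 (hge.lt_of_ne (σ.injective.ne hij.ne'))).ne heq
  · rintro ⟨hmono, htie⟩ a b hab hne
    have hij : σ⁻¹ a < σ⁻¹ b := hab.lt_of_ne (σ⁻¹.injective.ne hne)
    have hle : f a ≤ f b := by simpa using hmono hij
    refine ⟨hle, fun hba => hle.lt_of_ne fun heq => ?_⟩
    have hab' : a < b := by simpa using htie _ _ hij (by simpa using heq)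
    exact lt_asymm hab' hba

theorem isPPart_sort (f : Fin n → X) :
    IsPPart (fun a b => (Tuple.sort f)⁻¹ a ≤ (Tuple.sort f)⁻¹ b) f :=
  (isPPart_perm_iff_eq_sort f _).2 rfl

theorem IsPPart.mono {r s : Fin n → Fin n → Prop} {f : Fin n → X} (hf : IsPPart s f)
    (hrs : ∀ i j, r i j → s i j) : IsPPart r f :=
  fun i j hij => hf i j (hrs i j hij)

theorem IsPPart.not_of_opposite {r s : Fin n → Fin n → Prop} {f : Fin n → X}
    (hr : IsPPart r f) (hs : IsPPart s f) {i j : Fin n} (hij : r i j) (hji : s j i)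
    (hne : i ≠ j) : False := by
  obtain ⟨hle, hlt⟩ := hr i j hij hne
  obtain ⟨hge, hgt⟩ := hs j i hji hne.symm
  rcases hne.lt_or_gt with h | h
  · exact (hgt h).not_ge hle
  · exact (hlt h).not_ge hge

theorem IsPPart.isLinExt_sort {r : Fin n → Fin n → Prop} {f : Fin n → X} (hf : IsPPart r f) :
    IsLinExt r (Tuple.sort f) := by
  intro i j hij
  by_contra! hlt
  exact hf.not_of_opposite (isPPart_sort f) hij hlt.le fun h => hlt.ne (by rw [h])

end

theorem ftpp_general {n : ℕ} {X : Type*} [LinearOrder X] (r : Fin n → Fin n → Prop)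
    (f : Fin n → X) :
    IsPPart r f ↔
      ∃! σ : Equiv.Perm (Fin n),
        IsLinExt r σ ∧ IsPPart (fun a b => σ⁻¹ a ≤ σ⁻¹ b) f := by
  constructor
  · intro hf
    exact ⟨Tuple.sort f, ⟨hf.isLinExt_sort, isPPart_sort f⟩,
      fun σ hσ => (isPPart_perm_iff_eq_sort f σ).1 hσ.2⟩
  · rintro ⟨σ, ⟨hσr, hσf⟩, -⟩
    exact hσf.mono hσr

/-- Fundamental theorem of `P`-partitions: the set of `P`-partitions is the
disjoint union, over all linear extensions `σ` of `P`, of the sets of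
`σ`-partitions. -/
theorem ftpp {n : ℕ} {X : Type*} [LinearOrder X] (r : Fin n → Fin n → Prop)
    (hr : IsPartialOrder (Fin n) r) (f : Fin n → X) :
    IsPPart r f ↔
      ∃! σ : Equiv.Perm (Fin n),
        IsLinExt r σ ∧ IsPPart (fun a b => σ⁻¹ a ≤ σ⁻¹ b) f :=
  ftpp_general r f
end

section
/- For all positive integers k, l, and any permutation π ∈ S_n: C(kl+n-1-des(π), n) = Σ_{στ=π} C(k+n-1-des(σ), n) · C(l+n-1-des(τ), n), where the sum ranges over all pairs (σ,τ) ∈ S_n × S_n with στ = π. -/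
open Finset
open scoped Classical

/-!
Read `Tuple.sort h`, for a word `h : Fin n → Fin m`, as the permutation listing the positions in
increasing order of `(h i, i)`. The words with `Tuple.sort h = π` are those for which `h ∘ π` is
weakly increasing, strictly across every descent of `π`. Adding `s - #{descents before s}` at
position `s` turns them into the strictly increasing sequences below `m + n - 1 - des π`, so there
are `C(m + n - 1 - des π, n)` of them.

A word `H` over `[0, kl)` is written digitwise as `H i = G i + k * F (σ⁻¹ i)` with `G` over
`[0, k)`, `F` over `[0, l)` and `σ = Tuple.sort G`. Ordering positions by `(H i, i)` means
ordering by `F` first and then by `(G i, i)`, that is by `σ⁻¹ i`; hence `Tuple.sort H = σ * τ`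
exactly when `Tuple.sort F = τ`, and summing over `σ` gives the convolution.
-/

lemma StrictMono.apply_add_sub_le {k : ℕ} {f : Fin k → ℕ} (hf : StrictMono f) {i j : Fin k}
    (hij : i ≤ j) : f i + (j - i) ≤ f j := by
  have := card_le_card_of_injOn f (s := Icc i j) (t := Icc (f i) (f j))
    (fun x hx => by
      simp only [coe_Icc, Set.mem_Icc] at hx ⊢
      exact ⟨hf.monotone hx.1, hf.monotone hx.2⟩) hf.injective.injOn
  simp only [Fin.card_Icc, Nat.card_Icc] at this
  omega

lemma Finset.sum_filter_mul_eq_sum_inv_mul {G M : Type*} [Group G] [Fintype G] [DecidableEq G]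
    [AddCommMonoid M] (g : G) (f : G × G → M) :
    ∑ p ∈ univ.filter (fun p : G × G => p.1 * p.2 = g), f p = ∑ x, f (x, x⁻¹ * g) := by
  simp [sum_filter, Fintype.sum_prod_type, ← eq_inv_mul_iff_mul_eq]

lemma toLex_finProdFinEquiv_lt_iff {α : Type*} [Preorder α] {a b : ℕ} {x x' : Fin a}
    {y y' : Fin b} {z z' : α} :
    toLex (finProdFinEquiv (x, y), z) < toLex (finProdFinEquiv (x', y'), z') ↔
      toLex (x, toLex (y, z)) < toLex (x', toLex (y', z')) := by
  simp only [Prod.Lex.toLex_lt_toLex, Fin.lt_def, Fin.ext_iff, finProdFinEquiv_apply_val]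
  have hy := y.isLt
  have hy' := y'.isLt
  rcases lt_trichotomy (x : ℕ) x' with h | h | h
  · have : b * (x + 1) ≤ b * x' := Nat.mul_le_mul_left b h
    simp only [h, true_or, iff_true]
    left; nlinarith
  · simp only [h, lt_irrefl, false_or, true_and, add_lt_add_iff_right, add_left_inj]
  · have : b * (x' + 1) ≤ b * x := Nat.mul_le_mul_left b h
    simp only [not_lt.2 h.le, h.ne', false_and, or_false, iff_false, not_or, not_and]
    constructor
    · nlinarith
    · intro; nlinarith

namespace StableSort

variable {n m : ℕ}

def countBelow (D : Finset ℕ) (s : ℕ) : ℕ := #{d ∈ D | d < s}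

lemma countBelow_le (D : Finset ℕ) (s : ℕ) : countBelow D s ≤ s :=
  (card_le_card fun _ hd => mem_range.2 (mem_filter.1 hd).2).trans (card_range s).le

lemma countBelow_succ (D : Finset ℕ) (s : ℕ) :
    countBelow D (s + 1) = countBelow D s + if s ∈ D then 1 else 0 := by
  have : {d ∈ D | d < s + 1} = {d ∈ D | d < s} ∪ {d ∈ D | d = s} := by
    ext d; simp only [mem_union, mem_filter, Nat.lt_succ_iff_lt_or_eq, and_or_left]
  rw [countBelow, this, card_union_of_disjoint, filter_eq']
  · split_ifs <;> rfl
  · exact disjoint_filter.2 fun d _ h => h.ne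

lemma countBelow_eq_card {D : Finset ℕ} {s : ℕ} (hD : D ⊆ range s) : countBelow D s = #D := by
  rw [countBelow, filter_true_of_mem fun d hd => mem_range.1 (hD hd)]

def MonotoneStrictAt (D : Finset ℕ) (g : Fin (n + 1) → Fin m) : Prop :=
  ∀ i : Fin n, (g i.castSucc : ℕ) + (if (i : ℕ) ∈ D then 1 else 0) ≤ g i.succ

def shiftUp {k : ℕ} (D : Finset ℕ) (g : Fin k → Fin m) (i : Fin k) : ℕ :=
  g i + (i - countBelow D i)

lemma strictMono_shiftUp_iff {D : Finset ℕ} {g : Fin (n + 1) → Fin m} :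
    StrictMono (shiftUp D g) ↔ MonotoneStrictAt D g := by
  rw [Fin.strictMono_iff_lt_succ]
  refine forall_congr' fun i => ?_
  have := countBelow_le D i
  simp only [shiftUp, Fin.val_castSucc, Fin.val_succ, countBelow_succ]
  split_ifs <;> omega

lemma shiftUp_injective (D : Finset ℕ) {k : ℕ} :
    Function.Injective (shiftUp (m := m) (k := k) D) := by
  intro g₁ g₂ h
  funext i
  have := congrFun h i
  simp only [shiftUp] at this
  exact Fin.ext (by omega)

lemma shiftUp_lt {D : Finset ℕ} (hD : D ⊆ range n) {g : Fin (n + 1) → Fin m}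
    (hg : MonotoneStrictAt D g) (i : Fin (n + 1)) : shiftUp D g i < m + n - #D := by
  have hle := (strictMono_shiftUp_iff.2 hg).monotone (Fin.le_last i)
  have hlast : shiftUp D g (Fin.last n) = g (Fin.last n) + (n - #D) := by
    simp [shiftUp, countBelow_eq_card hD]
  have := (g (Fin.last n)).isLt
  have := card_le_card hD
  simp only [card_range] at this
  omega

lemma exists_shiftUp_eq {D : Finset ℕ} (hD : D ⊆ range n) {f : Fin (n + 1) → ℕ}
    (hf : StrictMono f) (hlt : ∀ i, f i < m + n - #D) :
    ∃ g : Fin (n + 1) → Fin m, shiftUp D g = f := by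
  have hD' : #D ≤ n := by simpa using card_le_card hD
  have hbelow (i : Fin (n + 1)) : countBelow D i ≤ #D :=
    card_le_card (filter_subset _ _)
  have hge (i : Fin (n + 1)) : (i : ℕ) ≤ f i := by
    have := hf.apply_add_sub_le (Fin.zero_le i)
    simp only [Fin.val_zero, Nat.sub_zero] at this
    omega
  have hup (i : Fin (n + 1)) : f i + (n - i) < m + n - #D := by
    have := hf.apply_add_sub_le (Fin.le_last i)
    have := hlt (Fin.last n)
    simp only [Fin.val_last] at *
    omega
  refine ⟨fun i => ⟨f i - (i - countBelow D i), ?_⟩, ?_⟩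
  · have := hup i; have := hge i; have := hbelow i; have := i.isLt; omega
  · funext i
    have := hge i
    simp only [shiftUp]
    omega

theorem card_monotoneStrictAt {D : Finset ℕ} (hD : D ⊆ range n) :
    #{g : Fin (n + 1) → Fin m | MonotoneStrictAt D g} = (m + n - #D).choose (n + 1) := by
  rw [← card_range (m + n - #D), ← card_powersetCard]
  refine card_bij (fun g _ => image (shiftUp D g) univ) (fun g hg => ?_)
    (fun g₁ hg₁ g₂ hg₂ h => ?_) (fun S hS => ?_)
  · rw [mem_filter] at hg
    refine mem_powersetCard.2 ⟨fun x hx => ?_, ?_⟩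
    · obtain ⟨i, -, rfl⟩ := mem_image.1 hx
      exact mem_range.2 (shiftUp_lt hD hg.2 i)
    · rw [card_image_of_injective _ (strictMono_shiftUp_iff.2 hg.2).injective, card_univ,
        Fintype.card_fin]
  · have hmono₁ := strictMono_shiftUp_iff.2 (mem_filter.1 hg₁).2
    have hmono₂ := strictMono_shiftUp_iff.2 (mem_filter.1 hg₂).2
    refine shiftUp_injective D ((hmono₁.range_inj hmono₂).1 ?_)
    simpa only [coe_image, coe_univ, Set.image_univ] using
      congrArg ((↑) : Finset ℕ → Set ℕ) h
  · obtain ⟨hsub, hcard⟩ := mem_powersetCard.1 hS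
    set f := S.orderEmbOfFin hcard
    obtain ⟨g, hg⟩ := exists_shiftUp_eq hD (f := fun i => (f i : ℕ)) f.strictMono
      fun i => mem_range.1 (hsub (orderEmbOfFin_mem S hcard i))
    refine ⟨g, mem_filter.2 ⟨mem_univ g, strictMono_shiftUp_iff.1 (hg ▸ f.strictMono)⟩,
      ?_⟩
    rw [hg, ← coe_inj, coe_image, coe_univ, Set.image_univ]
    exact range_orderEmbOfFin S hcard

lemma coe_mem_desSetA_iff (π : Equiv.Perm (Fin (n + 1))) (i : Fin n) :
    (i : ℕ) ∈ desSetA (n + 1) π ↔ π i.succ < π i.castSucc := by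
  simp only [desSetA, aval, Order.lt_add_one_iff, Order.add_one_le_iff, add_tsub_cancel_right,
    mem_filter, mem_range, Fin.is_lt, ↓reduceDIte, Fin.is_le', Fin.val_fin_lt, true_and]
  rfl

lemma desSetA_subset (π : Equiv.Perm (Fin (n + 1))) : desSetA (n + 1) π ⊆ range n :=
  filter_subset _ _

lemma sort_eq_iff_monotoneStrictAt {h : Fin (n + 1) → Fin m} {π : Equiv.Perm (Fin (n + 1))} :
    Tuple.sort h = π ↔ MonotoneStrictAt (desSetA (n + 1) π) (h ∘ π) := by
  rw [eq_comm, Tuple.eq_sort_iff', Fin.strictMono_iff_lt_succ]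
  refine forall_congr' fun i => ?_
  have hne : π i.castSucc ≠ π i.succ := π.injective.ne Fin.castSucc_lt_succ.ne
  simp only [coe_mem_desSetA_iff]
  show toLex (h (π i.castSucc), π i.castSucc) < toLex (h (π i.succ), π i.succ) ↔ _
  rw [Prod.Lex.toLex_lt_toLex]
  simp only [Function.comp_apply, Fin.lt_def, Fin.ext_iff] at hne ⊢
  split_ifs <;> omega

theorem card_sort_eq (π : Equiv.Perm (Fin n)) :
    #{h : Fin n → Fin m | Tuple.sort h = π} = (m + n - 1 - desA n π).choose n := by
  cases n with
  | zero => simp [Subsingleton.elim _ π]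
  | succ n =>
    rw [Nat.add_succ_sub_one, desA, ← card_monotoneStrictAt (desSetA_subset π)]
    refine card_equiv (Equiv.arrowCongr π.symm (Equiv.refl _)) fun h => ?_
    simp only [mem_filter, mem_univ, true_and, sort_eq_iff_monotoneStrictAt]
    rfl

variable {a b : ℕ}

def lowDigits (H : Fin n → Fin (a * b)) (i : Fin n) : Fin b := (finProdFinEquiv.symm (H i)).2

/-- `(G, F) ↦ H` with `H i = G i + b * F (σ⁻¹ i)`. -/
def digitsEquiv (σ : Equiv.Perm (Fin n)) :
    (Fin n → Fin b) × (Fin n → Fin a) ≃ (Fin n → Fin (a * b)) where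
  toFun p i := finProdFinEquiv (p.2 (σ⁻¹ i), p.1 i)
  invFun H := (lowDigits H, fun j => (finProdFinEquiv.symm (H (σ j))).1)
  left_inv p := by
    ext i <;> simp only [lowDigits, Equiv.Perm.coe_inv, Equiv.symm_apply_apply]
  right_inv H := by
    funext i
    simp only [lowDigits, Equiv.Perm.coe_inv, Equiv.apply_symm_apply, Prod.mk.eta]

lemma lowDigits_digitsEquiv (σ : Equiv.Perm (Fin n)) (p : (Fin n → Fin b) × (Fin n → Fin a)) :
    lowDigits (digitsEquiv σ p) = p.1 :=
  congrArg Prod.fst ((digitsEquiv σ).symm_apply_apply p)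

lemma digitsEquiv_apply_apply (σ : Equiv.Perm (Fin n)) (G : Fin n → Fin b) (F : Fin n → Fin a)
    (j : Fin n) : digitsEquiv σ (G, F) (σ j) = finProdFinEquiv (F j, G (σ j)) := by
  simp [digitsEquiv]

lemma sort_digitsEquiv_iff {σ τ : Equiv.Perm (Fin n)} {G : Fin n → Fin b}
    (hG : Tuple.sort G = σ) (F : Fin n → Fin a) :
    Tuple.sort (digitsEquiv σ (G, F)) = σ * τ ↔ Tuple.sort F = τ := by
  have hG' (i j : Fin n) : toLex (G (σ i), σ i) < toLex (G (σ j), σ j) ↔ i < j :=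
    (Tuple.eq_sort_iff'.1 hG.symm).lt_iff_lt
  rw [eq_comm, Tuple.eq_sort_iff', eq_comm, Tuple.eq_sort_iff']
  refine forall₂_congr fun s t => imp_congr_right fun _ => ?_
  show toLex (digitsEquiv σ (G, F) (σ (τ s)), σ (τ s)) <
      toLex (digitsEquiv σ (G, F) (σ (τ t)), σ (τ t)) ↔
        toLex (F (τ s), τ s) < toLex (F (τ t), τ t)
  rw [digitsEquiv_apply_apply, digitsEquiv_apply_apply, toLex_finProdFinEquiv_lt_iff,
    Prod.Lex.toLex_lt_toLex (β := Fin b ×ₗ Fin n), hG', Prod.Lex.toLex_lt_toLex]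

theorem card_sort_eq_mul (π : Equiv.Perm (Fin n)) :
    #{H : Fin n → Fin (a * b) | Tuple.sort H = π} =
      ∑ p ∈ univ.filter (fun p : Equiv.Perm (Fin n) × Equiv.Perm (Fin n) => p.1 * p.2 = π),
        #{G : Fin n → Fin b | Tuple.sort G = p.1} *
          #{F : Fin n → Fin a | Tuple.sort F = p.2} := by
  rw [Finset.sum_filter_mul_eq_sum_inv_mul,
    card_eq_sum_card_fiberwise (f := fun H => Tuple.sort (lowDigits H)) (t := univ)
      fun _ _ => mem_univ _]
  refine sum_congr rfl fun σ _ => ?_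
  rw [← card_product]
  refine (card_equiv (digitsEquiv σ) fun ⟨G, F⟩ => ?_).symm
  simp only [mem_product, mem_filter, mem_univ, true_and, lowDigits_digitsEquiv]
  constructor
  · rintro ⟨hG, hF⟩
    refine ⟨?_, hG⟩
    rw [← mul_inv_cancel_left σ π]
    exact (sort_digitsEquiv_iff hG F).2 hF
  · rintro ⟨hH, hG⟩
    refine ⟨hG, (sort_digitsEquiv_iff hG F).1 ?_⟩
    rwa [mul_inv_cancel_left]

end StableSort

theorem structure_mult_A_general (n k l : ℕ)
    (π : Equiv.Perm (Fin n)) :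
    Nat.choose (k * l + n - 1 - desA n π) n
      = ∑ p ∈ Finset.univ.filter
          (fun p : Equiv.Perm (Fin n) × Equiv.Perm (Fin n) => p.1 * p.2 = π),
          Nat.choose (k + n - 1 - desA n p.1) n *
            Nat.choose (l + n - 1 - desA n p.2) n := by
  rw [← StableSort.card_sort_eq, mul_comm k l, StableSort.card_sort_eq_mul]
  simp only [StableSort.card_sort_eq]

/-- For positive integers `k, l` and any `π ∈ S_n`:
`C(kl+n-1-des(π), n) = Σ_{στ=π} C(k+n-1-des(σ), n) · C(l+n-1-des(τ), n)`. -/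
theorem structure_mult_A (n k l : ℕ) (hk : 0 < k) (hl : 0 < l)
    (π : Equiv.Perm (Fin n)) :
    Nat.choose (k * l + n - 1 - desA n π) n
      = ∑ p ∈ Finset.univ.filter
          (fun p : Equiv.Perm (Fin n) × Equiv.Perm (Fin n) => p.1 * p.2 = π),
          Nat.choose (k + n - 1 - desA n p.1) n *
            Nat.choose (l + n - 1 - desA n p.2) n :=
  structure_mult_A_general n k l π
end

section
/- Define elements e_1, ..., e_n of the rational group algebra of S_n by Σ_i e_i x^i = Σ_{π∈S_n} C(x+n-1-des(π), n)·π (expanding the right side as a polynomial in x). Then the e_i are orthogonal idempotents: e_i² = e_i and e_i e_j = 0 for i ≠ j. -/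
open Finset
open scoped Classical

/-- The polynomial binomial coefficient `C(x, n) = x(x-1)⋯(x-n+1)/n!` for `x : ℚ`. -/
def binomQ (x : ℚ) (n : ℕ) : ℚ :=
  (∏ j ∈ Finset.range n, (x - j)) / n.factorial


namespace EulAux
variable {n : ℕ}

/-- weakly increasing sequence, strict at positions in `E`. -/
def OK {L : Type*} [LinearOrder L] (n : ℕ) (E : Finset ℕ) (v : Fin n → L) : Prop :=
  ∀ (i : ℕ) (hi : i + 1 < n),
    v ⟨i, Nat.lt_of_succ_lt hi⟩ ≤ v ⟨i+1, hi⟩ ∧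
      (i ∈ E → v ⟨i, Nat.lt_of_succ_lt hi⟩ < v ⟨i+1, hi⟩)

/-- descent set of an arbitrary tuple. -/
def dset {L : Type*} [LinearOrder L] {n : ℕ} (w : Fin n → L) : Finset ℕ :=
  (Finset.range (n-1)).filter fun i =>
    ∀ hi : i + 1 < n, w ⟨i+1, hi⟩ < w ⟨i, Nat.lt_of_succ_lt hi⟩

lemma mem_dset {L : Type*} [LinearOrder L] {w : Fin n → L} {i : ℕ} (hi : i + 1 < n) :
    i ∈ dset w ↔ w ⟨i+1, hi⟩ < w ⟨i, Nat.lt_of_succ_lt hi⟩ := by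
  simp only [dset, mem_filter, mem_range]
  constructor
  · rintro ⟨-, h⟩; exact h hi
  · intro h; exact ⟨by omega, fun _ => h⟩

lemma dset_subset {L : Type*} [LinearOrder L] (w : Fin n → L) :
    dset w ⊆ Finset.range (n-1) := filter_subset _ _

lemma strictMono_iff_consec {α : Type*} [Preorder α] {f : Fin n → α} :
    StrictMono f ↔ ∀ (i : ℕ) (hi : i + 1 < n),
      f ⟨i, Nat.lt_of_succ_lt hi⟩ < f ⟨i+1, hi⟩ := by
  constructor
  · intro hf i hi; exact hf (by simp [Fin.lt_def])
  · intro h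
    cases n with
    | zero => exact fun a => a.elim0
    | succ m =>
      rw [Fin.strictMono_iff_lt_succ]
      intro i
      have h2 : Fin.castSucc i = (⟨i.val, by omega⟩ : Fin (m+1)) := Fin.ext rfl
      have h3 : i.succ = (⟨i.val+1, by omega⟩ : Fin (m+1)) := Fin.ext rfl
      rw [h2, h3]; exact h i.val (by omega)

/-- key characterization: OK w.r.t. descent set of `w` ↔ the lex pair tuple is strictly
monotone, provided `w` has no equal consecutive values. -/
lemma ok_dset_iff {L1 L2 : Type*} [LinearOrder L1] [LinearOrder L2]
    {v : Fin n → L1} {w : Fin n → L2}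
    (hw : ∀ (i : ℕ) (hi : i + 1 < n), w ⟨i, Nat.lt_of_succ_lt hi⟩ ≠ w ⟨i+1, hi⟩) :
    OK n (dset w) v ↔ StrictMono (fun j => toLex (v j, w j)) := by
  rw [strictMono_iff_consec]
  constructor
  · intro h i hi
    obtain ⟨h1, h2⟩ := h i hi
    rw [Prod.Lex.lt_iff]
    rcases lt_or_eq_of_le h1 with h1' | h1'
    · exact Or.inl h1'
    · refine Or.inr ⟨h1', ?_⟩
      rcases lt_trichotomy (w ⟨i, Nat.lt_of_succ_lt hi⟩) (w ⟨i+1, hi⟩) with hw' | hw' | hw'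
      · exact hw'
      · exact absurd hw' (hw i hi)
      · exact absurd (h2 ((mem_dset hi).2 hw')) (by simp [h1'])
  · intro h i hi
    have := h i hi
    rw [Prod.Lex.lt_iff] at this
    constructor
    · rcases this with h' | ⟨h', -⟩
      · exact le_of_lt h'
      · exact le_of_eq h'
    · intro hmem
      have hww := (mem_dset hi).1 hmem
      rcases this with h' | ⟨-, h'⟩
      · exact h'
      · exact absurd hww (not_lt_of_gt h')

end EulAux
namespace EulAux
variable {n : ℕ}

lemma sm_ext {K : ℕ} {f g : Fin n → Fin K} (hf : StrictMono f) (hg : StrictMono g)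
    (h : Set.range f = Set.range g) : f = g := by
  have inst : WellFoundedLT (Fin n) := inferInstance
  exact @Set.range_injOn_strictMono (Fin n) (Fin K) _ _ inst f hf g hg h

lemma card_strictMono (n K : ℕ) :
    Fintype.card {w : Fin n → Fin K // StrictMono w} = K.choose n := by
  have e : {w : Fin n → Fin K // StrictMono w} ≃ {s : Finset (Fin K) // s.card = n} := by
    refine
      { toFun := fun w => ⟨Finset.univ.image w.1, by
          rw [Finset.card_image_of_injective _ w.2.injective, Finset.card_univ, Fintype.card_fin]⟩
        invFun := fun s => ⟨s.1.orderEmbOfFin s.2, (s.1.orderEmbOfFin s.2).strictMono⟩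
        left_inv := ?_
        right_inv := ?_ }
    · rintro ⟨w, hw⟩
      have hr : Set.range ((Finset.univ.image w).orderEmbOfFin (by
          rw [Finset.card_image_of_injective _ hw.injective, Finset.card_univ,
            Fintype.card_fin])) = Set.range w := by
        rw [Finset.range_orderEmbOfFin]
        ext a
        simp [Set.mem_range]
      ext1
      exact sm_ext (((Finset.univ.image w).orderEmbOfFin _).strictMono) hw hr
    · rintro ⟨s, hs⟩
      ext1
      ext a
      simp only [Finset.mem_image, Finset.mem_univ, true_and]
      constructor
      · rintro ⟨i, rfl⟩
        have := Finset.range_orderEmbOfFin s hs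
        have : s.orderEmbOfFin hs i ∈ Set.range (s.orderEmbOfFin hs) := Set.mem_range_self _
        rwa [Finset.range_orderEmbOfFin, Finset.mem_coe] at this
      · intro ha
        have : a ∈ Set.range (s.orderEmbOfFin hs) := by
          rw [Finset.range_orderEmbOfFin]; exact ha
        obtain ⟨i, hi⟩ := this
        exact ⟨i, hi⟩
  rw [Fintype.card_congr e, Fintype.card_subtype]
  rw [show Finset.filter (fun s : Finset (Fin K) => s.card = n) Finset.univ
      = Finset.powersetCard n (Finset.univ : Finset (Fin K)) by
    rw [Finset.powersetCard_eq_filter, Finset.powerset_univ]]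
  rw [Finset.card_powersetCard, Finset.card_univ, Fintype.card_fin]

lemma gap {K : ℕ} {f : Fin n → Fin K} (hf : StrictMono f) {a b : Fin n} (hab : a ≤ b) :
    (f a : ℕ) + ((b : ℕ) - (a : ℕ)) ≤ f b := by
  obtain ⟨k, hk⟩ : ∃ k, (b : ℕ) = (a : ℕ) + k := ⟨(b : ℕ) - a, by omega⟩
  induction k generalizing b with
  | zero =>
    have : a = b := Fin.ext (by omega)
    subst this; omega
  | succ k ih =>
    have hb' : (a : ℕ) + k < n := by have := b.isLt; omega
    set b' : Fin n := ⟨(a : ℕ) + k, hb'⟩ with hb'def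
    have hv : (b' : ℕ) = (a : ℕ) + k := rfl
    have h1 : f b' < f b := hf (by rw [Fin.lt_def]; omega)
    have h2 := ih (b := b') (by rw [Fin.le_def]; omega) hv
    have h3 : (f b' : ℕ) < (f b : ℕ) := h1
    omega
lemma le_apply_of_strictMono {K : ℕ} {w : Fin n → Fin K} (hw : StrictMono w) (j : Fin n) :
    (j : ℕ) ≤ (w j : ℕ) := by
  have h0 : (0:ℕ) < n := lt_of_le_of_lt (Nat.zero_le _) j.isLt
  have h1 := gap hw (a := ⟨0, h0⟩) (b := j) (by rw [Fin.le_def]; simp)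
  simp only [Fin.val_mk] at h1
  omega

lemma top_gap {K : ℕ} {w : Fin n → Fin K} (hw : StrictMono w) (j : Fin n) :
    (w j : ℕ) + ((n-1) - (j : ℕ)) < K := by
  have h0 : (0:ℕ) < n := lt_of_le_of_lt (Nat.zero_le _) j.isLt
  have h1 := gap hw (a := j) (b := ⟨n-1, by omega⟩) (by rw [Fin.le_def]; simp [Fin.val_mk]; omega)
  have h2 : (w ⟨n-1, by omega⟩ : ℕ) < K := (w _).isLt
  simp only [Fin.val_mk] at h1
  omega

lemma card_ok (n M : ℕ) (E : Finset ℕ) (hE : E ⊆ Finset.range (n-1)) :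
    Fintype.card {v : Fin n → Fin M // OK n E v} = (M + (n-1) - E.card).choose n := by
  classical
  set d : ℕ → ℕ := fun i => (E ∩ Finset.range i).card with hd
  have hcard : E.card ≤ n - 1 := by
    have := Finset.card_le_card hE; simpa using this
  have hdle : ∀ i : ℕ, d i ≤ i := fun i =>
    le_trans (Finset.card_le_card Finset.inter_subset_right) (by simp)
  have hdub : ∀ i : ℕ, d i ≤ E.card := fun i =>
    Finset.card_le_card Finset.inter_subset_left
  have hdE : ∀ i : ℕ, i ≤ n - 1 → E.card ≤ d i + ((n-1) - i) := by
    intro i hi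
    have h1 : d i + (E \ Finset.range i).card = E.card :=
      Finset.card_inter_add_card_sdiff E (Finset.range i)
    have h2 : E \ Finset.range i ⊆ Finset.range (n-1) \ Finset.range i :=
      Finset.sdiff_subset_sdiff hE (subset_refl _)
    have h3 : (Finset.range (n-1) \ Finset.range i).card = (n-1) - i := by
      rw [Finset.card_sdiff_of_subset (Finset.range_subset_range.2 hi)]; simp
    have h4 := Finset.card_le_card h2
    omega
  have hdstep : ∀ i : ℕ, d (i+1) = d i + (if i ∈ E then 1 else 0) := by
    intro i
    have hni : i ∉ Finset.range i ∩ E := by simp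
    rw [hd]
    simp only [Finset.inter_comm E _, Finset.range_add_one]
    by_cases hiE : i ∈ E
    · rw [Finset.insert_inter_of_mem hiE, Finset.card_insert_of_notMem hni, if_pos hiE]
    · rw [Finset.insert_inter_of_notMem hiE]; simp [hiE]
  set K := M + (n-1) - E.card with hK
  have hbound : ∀ (v : {v : Fin n → Fin M // OK n E v}) (j : Fin n),
      (v.1 j : ℕ) + ((j : ℕ) - d (j : ℕ)) < K := by
    intro v j
    have h1 : (v.1 j : ℕ) < M := (v.1 j).isLt
    have h2 : (j : ℕ) < n := j.isLt
    have h3 := hdle (j : ℕ)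
    have h4 := hdE (j : ℕ) (by omega)
    omega
  have e : {v : Fin n → Fin M // OK n E v} ≃ {w : Fin n → Fin K // StrictMono w} := by
    refine
      { toFun := fun v => ⟨fun j => ⟨(v.1 j : ℕ) + ((j : ℕ) - d (j : ℕ)), hbound v j⟩, ?_⟩
        invFun := fun w => ⟨fun j => ⟨(w.1 j : ℕ) - ((j : ℕ) - d (j : ℕ)), ?_⟩, ?_⟩
        left_inv := ?_
        right_inv := ?_ }
    · rw [strictMono_iff_consec]
      intro i hi
      obtain ⟨hle, hlt⟩ := v.2 i hi
      rw [Fin.le_def] at hle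
      rw [Fin.mk_lt_mk]
      have h5 := hdstep i
      have h6 := hdle i
      simp only [Fin.val_mk] at hle ⊢
      by_cases hiE : i ∈ E
      · have hstr := hlt hiE
        rw [Fin.lt_def] at hstr
        rw [if_pos hiE] at h5
        omega
      · rw [if_neg hiE] at h5
        omega
    · -- bound for invFun value
      have h1 := top_gap w.2 j
      have hz := le_apply_of_strictMono w.2 j
      have h3 := hdle (j : ℕ)
      have h4 := hdub (j : ℕ)
      have h5 : (j : ℕ) < n := j.isLt
      omega
    · -- OK property for invFun
      intro i hi
      have hwlt := (strictMono_iff_consec.1 w.2) i hi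
      rw [Fin.lt_def] at hwlt
      have h5 := hdstep i
      have h6 := hdle i
      have h7 := hdle (i+1)
      have hz1 := le_apply_of_strictMono w.2 ⟨i, Nat.lt_of_succ_lt hi⟩
      have hz2 := le_apply_of_strictMono w.2 ⟨i+1, hi⟩
      simp only [Fin.val_mk] at hwlt hz1 hz2 ⊢
      constructor
      · rw [Fin.mk_le_mk]
        by_cases hiE : i ∈ E
        · rw [if_pos hiE] at h5; omega
        · rw [if_neg hiE] at h5; omega
      · intro hiE
        rw [Fin.mk_lt_mk]
        rw [if_pos hiE] at h5
        omega
    · rintro ⟨v, hv⟩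
      ext j
      simp only [Fin.val_mk]
      omega
    · rintro ⟨w, hw⟩
      ext j
      simp only [Fin.val_mk]
      have hz1 := le_apply_of_strictMono hw j
      have h3 := hdle (j : ℕ)
      omega
  rw [Fintype.card_congr e, card_strictMono]
lemma ok_map {L L' : Type*} [LinearOrder L] [LinearOrder L'] (e : L ≃o L')
    {E : Finset ℕ} {v : Fin n → L} (h : OK n E v) : OK n E (fun j => e (v j)) :=
  fun i hi => ⟨e.le_iff_le.2 (h i hi).1, fun m => e.lt_iff_lt.2 ((h i hi).2 m)⟩

lemma card_ok' (n : ℕ) (L : Type*) [LinearOrder L] [Fintype L] (E : Finset ℕ)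
    (hE : E ⊆ Finset.range (n-1)) :
    Fintype.card {v : Fin n → L // OK n E v}
      = (Fintype.card L + (n-1) - E.card).choose n := by
  classical
  set M := Fintype.card L with hM
  let e : Fin M ≃o L := monoEquivOfFin L rfl
  have : {v : Fin n → L // OK n E v} ≃ {v : Fin n → Fin M // OK n E v} :=
    { toFun := fun v => ⟨fun j => e.symm (v.1 j), ok_map e.symm v.2⟩
      invFun := fun v => ⟨fun j => e (v.1 j), ok_map e v.2⟩
      left_inv := fun v => by ext j; simp
      right_inv := fun v => by ext j; simp }
  rw [Fintype.card_congr this, card_ok n M E hE]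

lemma sm_ext' {α : Type*} [LinearOrder α] {f g : Fin n → α}
    (hf : StrictMono f) (hg : StrictMono g)
    (h : Set.range f = Set.range g) : f = g := by
  have inst : WellFoundedLT (Fin n) := inferInstance
  exact @Set.range_injOn_strictMono (Fin n) α _ _ inst f hf g hg h

lemma strictMono_sort {α : Type*} [LinearOrder α] (w : Fin n → α)
    (hw : Function.Injective w) : StrictMono (w ∘ Tuple.sort w) :=
  (Tuple.monotone_sort w).strictMono_of_injective (hw.comp (Tuple.sort w).injective)

lemma sort_unique {α : Type*} [LinearOrder α] {w : Fin n → α}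
    (hw : Function.Injective w) {δ : Equiv.Perm (Fin n)}
    (hδ : StrictMono (w ∘ δ)) : δ = Tuple.sort w := by
  have h1 : Set.range (w ∘ δ) = Set.range (w ∘ Tuple.sort w) := by
    rw [Set.range_comp, Set.range_comp]
    rw [Set.range_eq_univ.2 δ.surjective, Set.range_eq_univ.2
      (Tuple.sort w).surjective]
  have h2 := sm_ext' hδ (strictMono_sort w hw) h1
  exact Equiv.ext fun j => hw (congrFun h2 j)
lemma perm_consec_ne (π : Equiv.Perm (Fin n)) :
    ∀ (i : ℕ) (hi : i + 1 < n),
      π ⟨i, Nat.lt_of_succ_lt hi⟩ ≠ π ⟨i+1, hi⟩ := by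
  intro i hi h
  have := π.injective h
  simp only [Fin.mk.injEq] at this
  omega

lemma dset_perm (π : Equiv.Perm (Fin n)) : desSetA n π = dset (fun j => π j) := by
  ext i
  simp only [desSetA, dset, Finset.mem_filter, Finset.mem_range]
  refine and_congr_right fun h1 => ?_
  have hi1 : i + 1 < n := by omega
  have hi0 : i < n := by omega
  rw [aval, aval, dif_pos hi1, dif_pos hi0]
  constructor
  · intro h2 hi
    exact h2
  · intro h2
    exact h2 hi1

lemma lex_tri_iff {A B C : Type*} [LinearOrder A] [LinearOrder B] [LinearOrder C]
    {a a' : A} {b b' : B} {c c' : C} :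
    toLex (toLex (a, b), c) < toLex (toLex (a', b'), c')
      ↔ toLex (a, toLex (b, c)) < toLex (a', toLex (b', c')) := by
  simp only [Prod.Lex.lt_iff, toLex_inj, Prod.mk.injEq, ofLex_toLex]
  tauto

lemma ok_split {pp qq : ℕ} (π : Equiv.Perm (Fin n)) (v : Fin n → Lex (Fin pp × Fin qq)) :
    OK n (desSetA n π) v
      ↔ OK n (dset (fun j => toLex ((ofLex (v j)).2, π j))) (fun j => (ofLex (v j)).1) := by
  rw [dset_perm π]
  rw [ok_dset_iff (perm_consec_ne π)]
  rw [ok_dset_iff (v := fun j => (ofLex (v j)).1)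
    (w := fun j => toLex ((ofLex (v j)).2, π j)) ?hne]
  case hne =>
    intro i hi h
    have := congrArg (fun x => (ofLex x).2) h
    exact perm_consec_ne π i hi this
  rw [strictMono_iff_consec, strictMono_iff_consec]
  constructor <;> intro h i hi <;> have hh := h i hi
  · exact lex_tri_iff.1 hh
  · exact lex_tri_iff.2 hh
lemma desSetA_subset (π : Equiv.Perm (Fin n)) : desSetA n π ⊆ Finset.range (n-1) := by
  unfold desSetA; exact Finset.filter_subset _ _

lemma key (n p q : ℕ) (π : Equiv.Perm (Fin n)) :
    (p * q + (n-1) - desA n π).choose n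
      = ∑ ρ : Equiv.Perm (Fin n),
          (q + (n-1) - desA n ρ).choose n * (p + (n-1) - desA n (ρ⁻¹ * π)).choose n := by
  classical
  set W : (Fin n → Fin q) → Fin n → Lex (Fin q × Fin n) :=
    fun h j => toLex (h j, π j) with hW
  have hWinj : ∀ h, Function.Injective (W h) := by
    intro h a b hab
    exact π.injective (congrArg (fun x => (ofLex x).2) hab)
  set sp : (Fin n → Fin q) → Equiv.Perm (Fin n) := fun h => Tuple.sort (W h) with hsp
  have hspm : ∀ h, StrictMono (W h ∘ sp h) := fun h => strictMono_sort (W h) (hWinj h)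
  have hspu : ∀ (h) (δ : Equiv.Perm (Fin n)), StrictMono (W h ∘ ⇑δ) → δ = sp h := fun h δ hδ => sort_unique (hWinj h) hδ
  have hLcard : Fintype.card (Lex (Fin p × Fin q)) = p * q := by
    rw [← Fintype.card_congr (toLex (α := Fin p × Fin q))]
    simp
  have hL : (p * q + (n-1) - desA n π).choose n
      = Fintype.card {v : Fin n → Lex (Fin p × Fin q) // OK n (desSetA n π) v} := by
    rw [card_ok' n _ _ (desSetA_subset π), hLcard]
    rfl
  have e1 : {v : Fin n → Lex (Fin p × Fin q) // OK n (desSetA n π) v}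
      ≃ Σ h : Fin n → Fin q, {g : Fin n → Fin p // OK n (dset (W h)) g} :=
    { toFun := fun v => ⟨fun j => (ofLex (v.1 j)).2,
        ⟨fun j => (ofLex (v.1 j)).1, (ok_split π v.1).1 v.2⟩⟩
      invFun := fun x => ⟨fun j => toLex (x.2.1 j, x.1 j), (ok_split π _).2 x.2.2⟩
      left_inv := fun v => rfl
      right_inv := fun x => rfl }
  have hsplit : Fintype.card {v : Fin n → Lex (Fin p × Fin q) // OK n (desSetA n π) v}
      = ∑ h : Fin n → Fin q, (p + (n-1) - (dset (W h)).card).choose n := by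
    rw [Fintype.card_congr e1, Fintype.card_sigma]
    exact Finset.sum_congr rfl fun h _ => card_ok n p _ (dset_subset _)
  have hfibcount : ∀ δ : Equiv.Perm (Fin n),
      (Finset.univ.filter (fun h : Fin n → Fin q => sp h = δ)).card
        = (q + (n-1) - desA n (π * δ)).choose n := by
    intro δ
    rw [← Fintype.card_subtype]
    have e2 : {h : Fin n → Fin q // sp h = δ}
        ≃ {u : Fin n → Fin q // OK n (desSetA n (π * δ)) u} := by
      refine
        { toFun := fun h => ⟨fun j => h.1 (δ j), ?_⟩
          invFun := fun u => ⟨fun j => u.1 (δ⁻¹ j), ?_⟩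
          left_inv := ?_
          right_inv := ?_ }
      · -- OK from strictMono
        have hs := hspm h.1
        rw [h.2] at hs
        rw [dset_perm]
        exact (ok_dset_iff (perm_consec_ne (π * δ))).2 hs
      · -- sp u' = δ
        have hok : OK n (dset (fun j => (π * δ) j)) u.1 := by
          rw [← dset_perm (π * δ)]; exact u.2
        have hs := (ok_dset_iff (perm_consec_ne (π * δ))).1 hok
        have heq : W (fun j => u.1 (δ⁻¹ j)) ∘ δ = fun j => toLex (u.1 j, (π * δ) j) := by
          funext j
          simp [hW]
        exact (hspu _ δ (by rw [heq]; exact hs)).symm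
      · rintro ⟨h, hh⟩
        ext j
        simp
      · rintro ⟨u, hu⟩
        ext j
        simp
    rw [Fintype.card_congr e2, card_ok' n _ _ (desSetA_subset (π * δ)), Fintype.card_fin]
    rfl
  have hdset : ∀ h : Fin n → Fin q, (dset (W h)).card = desA n ((sp h)⁻¹) := by
    intro h
    have hds : dset (W h) = desSetA n ((sp h)⁻¹) := by
      rw [dset_perm ((sp h)⁻¹)]
      ext i
      simp only [dset, Finset.mem_filter, Finset.mem_range]
      refine and_congr_right fun h1 => ?_
      have hi : i + 1 < n := by omega
      constructor
      · intro h2 hi'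
        have hlt := h2 hi
        have e1' : W h ⟨i+1, hi⟩ = (W h ∘ sp h) ((sp h)⁻¹ ⟨i+1, hi⟩) := by
          simp [Function.comp, Equiv.apply_symm_apply]
        have e2' : W h ⟨i, Nat.lt_of_succ_lt hi⟩
            = (W h ∘ sp h) ((sp h)⁻¹ ⟨i, Nat.lt_of_succ_lt hi⟩) := by
          simp [Function.comp, Equiv.apply_symm_apply]
        rw [e1', e2'] at hlt
        exact (hspm h).lt_iff_lt.1 hlt
      · intro h2 hi'
        have hlt := (hspm h).lt_iff_lt.2 (h2 hi)
        simpa [Function.comp, Equiv.apply_symm_apply] using hlt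
    rw [hds]
    rfl
  rw [hL, hsplit]
  rw [← Finset.sum_fiberwise_of_maps_to (g := sp) (t := Finset.univ)
    (fun h _ => Finset.mem_univ (sp h))]
  have hstep : ∀ δ : Equiv.Perm (Fin n),
      (∑ h ∈ Finset.univ.filter (fun h : Fin n → Fin q => sp h = δ),
        (p + (n-1) - (dset (W h)).card).choose n)
      = (q + (n-1) - desA n (π * δ)).choose n * (p + (n-1) - desA n δ⁻¹).choose n := by
    intro δ
    have hcongr : ∀ h ∈ Finset.univ.filter (fun h : Fin n → Fin q => sp h = δ),
        (p + (n-1) - (dset (W h)).card).choose n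
          = (p + (n-1) - desA n δ⁻¹).choose n := by
      intro h hh
      obtain ⟨-, h2⟩ := Finset.mem_filter.1 hh
      rw [hdset h, h2]
    rw [Finset.sum_congr rfl hcongr, Finset.sum_const, hfibcount δ, smul_eq_mul]
  rw [Finset.sum_congr rfl fun δ _ => hstep δ]
  rw [← Equiv.sum_comp (Equiv.mulLeft π⁻¹)
    (fun δ => (q + (n-1) - desA n (π * δ)).choose n * (p + (n-1) - desA n δ⁻¹).choose n)]
  refine Finset.sum_congr rfl fun ρ _ => ?_
  simp only [Equiv.coe_mulLeft]
  rw [mul_inv_cancel_left, mul_inv_rev, inv_inv]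
noncomputable def Phi (n m : ℕ) : MonoidAlgebra ℚ (Equiv.Perm (Fin n)) :=
  ∑ π : Equiv.Perm (Fin n), MonoidAlgebra.single π (((m + (n-1) - desA n π).choose n : ℚ))

lemma Phi_mul (n p q : ℕ) : Phi n q * Phi n p = Phi n (p * q) := by
  classical
  unfold Phi
  rw [Finset.sum_mul_sum]
  have h1 : ∀ ρ : Equiv.Perm (Fin n),
      (∑ σ : Equiv.Perm (Fin n),
        MonoidAlgebra.single ρ (((q + (n-1) - desA n ρ).choose n : ℚ))
          * MonoidAlgebra.single σ (((p + (n-1) - desA n σ).choose n : ℚ)))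
      = ∑ π : Equiv.Perm (Fin n),
          MonoidAlgebra.single π
            (((q + (n-1) - desA n ρ).choose n : ℚ)
              * ((p + (n-1) - desA n (ρ⁻¹ * π)).choose n : ℚ)) := by
    intro ρ
    rw [← Equiv.sum_comp (Equiv.mulLeft ρ) (fun π => MonoidAlgebra.single π
      (((q + (n-1) - desA n ρ).choose n : ℚ)
        * ((p + (n-1) - desA n (ρ⁻¹ * π)).choose n : ℚ)))]
    refine Finset.sum_congr rfl fun σ _ => ?_
    rw [MonoidAlgebra.single_mul_single]
    simp [Equiv.coe_mulLeft, inv_mul_cancel_left]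
  rw [Finset.sum_congr rfl fun ρ _ => h1 ρ, Finset.sum_comm]
  refine Finset.sum_congr rfl fun π _ => ?_
  rw [← show ∀ (s : Finset (Equiv.Perm (Fin n))) (g : Equiv.Perm (Fin n) → ℚ),
      MonoidAlgebra.single π (∑ x ∈ s, g x) = ∑ x ∈ s, MonoidAlgebra.single π (g x) from
      fun s g => map_sum (MonoidAlgebra.singleAddHom π) g s]
  congr 1
  rw [show ((p * q + (n-1) - desA n π).choose n : ℚ)
      = ((∑ ρ : Equiv.Perm (Fin n), (q + (n-1) - desA n ρ).choose n
          * (p + (n-1) - desA n (ρ⁻¹ * π)).choose n : ℕ) : ℚ) from by rw [← key n p q π]]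
  rw [Nat.cast_sum]
  exact Finset.sum_congr rfl fun ρ _ => by push_cast; ring

lemma binomQ_nat (N k : ℕ) : binomQ (N : ℚ) k = (N.choose k : ℚ) := by
  rcases le_or_gt k N with h | h
  · unfold binomQ
    have hprod : (∏ j ∈ Finset.range k, ((N : ℚ) - j)) = ((N.descFactorial k : ℕ) : ℚ) := by
      rw [Nat.descFactorial_eq_prod_range, Nat.cast_prod]
      refine Finset.prod_congr rfl fun j hj => ?_
      rw [Finset.mem_range] at hj
      rw [Nat.cast_sub (by omega)]
    rw [hprod, Nat.descFactorial_eq_factorial_mul_choose, Nat.cast_mul, mul_comm,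
      mul_div_assoc, div_self (by exact_mod_cast (Nat.factorial_ne_zero k)), mul_one]
  · unfold binomQ
    rw [Finset.prod_eq_zero (Finset.mem_range.2 h) (by rw [sub_self]),
      Nat.choose_eq_zero_of_lt h]
    simp

lemma poly_extract (N : ℕ) (a : ℕ → ℚ)
    (h : ∀ m : ℕ, ∑ k ∈ Finset.range N, (m : ℚ) ^ k * a k = 0) :
    ∀ k, k < N → a k = 0 := by
  intro k hk
  set P : Polynomial ℚ := ∑ k ∈ Finset.range N, Polynomial.C (a k) * Polynomial.X ^ k with hP
  have hroot : ∀ m : ℕ, P.IsRoot (m : ℚ) := by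
    intro m
    have := h m
    simp only [hP, Polynomial.IsRoot, Polynomial.eval_finset_sum, Polynomial.eval_mul,
      Polynomial.eval_C, Polynomial.eval_pow, Polynomial.eval_X]
    rw [← this]
    exact Finset.sum_congr rfl fun j _ => mul_comm _ _
  have hP0 : P = 0 := by
    apply Polynomial.eq_zero_of_infinite_isRoot
    exact Set.infinite_of_injective_forall_mem (f := fun m : ℕ => (m : ℚ))
      (fun a b hab => Nat.cast_injective hab) (fun m => hroot m)
  have hc := congrArg (fun Q : Polynomial ℚ => Q.coeff k) hP0
  simp only [hP, Polynomial.finset_sum_coeff, Polynomial.coeff_C_mul, Polynomial.coeff_X_pow,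
    Polynomial.coeff_zero, mul_ite, mul_one, mul_zero] at hc
  rw [Finset.sum_ite_eq (Finset.range N) k a, if_pos (Finset.mem_range.2 hk)] at hc
  exact hc

lemma vec_extract {G : Type*} (N : ℕ) (c : ℕ → MonoidAlgebra ℚ G)
    (h : ∀ m : ℕ, ∑ k ∈ Finset.range N, (m : ℚ) ^ k • c k = 0) :
    ∀ k, k < N → c k = 0 := by
  intro k hk
  apply MonoidAlgebra.coeff_injective
  apply Finsupp.ext
  intro g
  have h' : ∀ m : ℕ, ∑ k ∈ Finset.range N, (m : ℚ) ^ k * (c k).coeff g = 0 := by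
    intro m
    have hsum : ((∑ k ∈ Finset.range N, (m : ℚ) ^ k • c k : MonoidAlgebra ℚ G)).coeff g
        = ∑ k ∈ Finset.range N, ((m : ℚ) ^ k • c k).coeff g :=
      by rw [MonoidAlgebra.coeff_sum]; exact Finsupp.finset_sum_apply _ _ _
    have hsmul : ∀ k, ((m : ℚ) ^ k • c k).coeff g = (m : ℚ) ^ k * (c k).coeff g := fun k =>
      Finsupp.smul_apply _ _ _
    calc ∑ k ∈ Finset.range N, (m : ℚ) ^ k * (c k).coeff g
        = ∑ k ∈ Finset.range N, ((m : ℚ) ^ k • c k).coeff g :=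
          Finset.sum_congr rfl fun k _ => (hsmul k).symm
      _ = ((∑ k ∈ Finset.range N, (m : ℚ) ^ k • c k : MonoidAlgebra ℚ G)).coeff g := hsum.symm
      _ = (0 : MonoidAlgebra ℚ G).coeff g := by rw [h m]
      _ = 0 := rfl
  simpa using poly_extract N (fun k => (c k).coeff g) h' k hk

end EulAux

/-- If `e_0, ..., e_n` in the group algebra `ℚ[S_n]` satisfy
`Σ_i e_i x^i = Σ_{π ∈ S_n} C(x+n-1-des(π), n)·π` for all `x`, then the `e_i`
are orthogonal idempotents: `e_i² = e_i` and `e_i e_j = 0` for `i ≠ j`. -/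
theorem eulerian_idempotents (n : ℕ)
    (e : ℕ → MonoidAlgebra ℚ (Equiv.Perm (Fin n)))
    (he : ∀ x : ℚ,
      ∑ i ∈ Finset.range (n + 1), x ^ i • e i
        = ∑ π : Equiv.Perm (Fin n),
            MonoidAlgebra.single π (binomQ (x + n - 1 - desA n π) n)) :
    ∀ i j, i ≤ n → j ≤ n → e i * e j = if i = j then e i else 0 := by
  classical
  have hd : ∀ π : Equiv.Perm (Fin n), desA n π ≤ n - 1 := by
    intro π
    have h1 := Finset.card_le_card (EulAux.desSetA_subset π)
    simpa [desA] using h1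
  have hPhi : ∀ m : ℕ, (∑ i ∈ Finset.range (n+1), ((m:ℚ))^i • e i) = EulAux.Phi n m := by
    intro m
    rw [he (m:ℚ)]
    unfold EulAux.Phi
    refine Finset.sum_congr rfl fun π _ => ?_
    congr 1
    rcases Nat.eq_zero_or_pos n with hn | hn
    · subst hn
      simp [binomQ]
    · have h2 := hd π
      have harg : (m:ℚ) + n - 1 - desA n π = ((m + (n-1) - desA n π : ℕ) : ℚ) := by
        rw [Nat.cast_sub (by omega), Nat.cast_add, Nat.cast_sub (by omega : 1 ≤ n),
          Nat.cast_one]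
        ring
      rw [harg, EulAux.binomQ_nat]
  have hmul : ∀ q p : ℕ,
      (∑ k ∈ Finset.range (n+1), ((q:ℚ)*(p:ℚ))^k • e k)
        = (∑ i ∈ Finset.range (n+1), ((q:ℚ))^i • e i)
          * (∑ j ∈ Finset.range (n+1), ((p:ℚ))^j • e j) := by
    intro q p
    rw [hPhi q, hPhi p, EulAux.Phi_mul n p q, ← hPhi (p*q)]
    refine Finset.sum_congr rfl fun k _ => ?_
    congr 1
    push_cast
    ring
  intro i j hi hj
  have step1 : ∀ (p : ℕ) (i' : ℕ), i' < n+1 →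
      (∑ j' ∈ Finset.range (n+1), ((p:ℚ))^j' • (e i' * e j')) = (p:ℚ)^i' • e i' := by
    intro p i' hi'
    have h0 : ∀ m : ℕ, ∑ i'' ∈ Finset.range (n+1), (m:ℚ)^i'' •
        ((∑ j' ∈ Finset.range (n+1), ((p:ℚ))^j' • (e i'' * e j')) - (p:ℚ)^i'' • e i'') = 0 := by
      intro m
      have hm := (hmul m p).symm
      rw [Finset.sum_mul_sum] at hm
      have hL : ∀ i'' : ℕ, (∑ j' ∈ Finset.range (n+1),
          ((m:ℚ)^i'' • e i'') * ((p:ℚ)^j' • e j'))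
          = (m:ℚ)^i'' • (∑ j' ∈ Finset.range (n+1), (p:ℚ)^j' • (e i'' * e j')) := by
        intro i''
        rw [Finset.smul_sum]
        refine Finset.sum_congr rfl fun j' _ => ?_
        rw [smul_mul_assoc, mul_smul_comm]
      have e1 : (∑ i'' ∈ Finset.range (n+1), (m:ℚ)^i'' •
          (∑ j' ∈ Finset.range (n+1), ((p:ℚ))^j' • (e i'' * e j')))
          = ∑ i'' ∈ Finset.range (n+1), ∑ j' ∈ Finset.range (n+1),
              ((m:ℚ)^i'' • e i'') * ((p:ℚ)^j' • e j') :=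
        Finset.sum_congr rfl fun i'' _ => (hL i'').symm
      have e2 : (∑ i'' ∈ Finset.range (n+1), (m:ℚ)^i'' • ((p:ℚ)^i'' • e i''))
          = ∑ k ∈ Finset.range (n+1), ((m:ℚ)*(p:ℚ))^k • e k :=
        Finset.sum_congr rfl fun k _ => by rw [mul_pow, mul_smul]
      have hsplit : (∑ i'' ∈ Finset.range (n+1), (m:ℚ)^i'' •
          ((∑ j' ∈ Finset.range (n+1), ((p:ℚ))^j' • (e i'' * e j')) - (p:ℚ)^i'' • e i''))
          = (∑ i'' ∈ Finset.range (n+1), (m:ℚ)^i'' •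
              (∑ j' ∈ Finset.range (n+1), ((p:ℚ))^j' • (e i'' * e j')))
            - (∑ i'' ∈ Finset.range (n+1), (m:ℚ)^i'' • ((p:ℚ)^i'' • e i'')) := by
        rw [← Finset.sum_sub_distrib]
        exact Finset.sum_congr rfl fun i'' _ => smul_sub _ _ _
      rw [hsplit, e1, e2, hm, sub_self]
    have := EulAux.vec_extract (n+1)
      (fun i'' => (∑ j' ∈ Finset.range (n+1), ((p:ℚ))^j' • (e i'' * e j')) - (p:ℚ)^i'' • e i'')
      h0 i' hi'
    exact sub_eq_zero.1 this
  have step2 : e i * e j = if j = i then e i else 0 := by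
    have h0 : ∀ p : ℕ, ∑ j' ∈ Finset.range (n+1), (p:ℚ)^j' •
        (e i * e j' - if j' = i then e i else 0) = 0 := by
      intro p
      have hsplit : (∑ j' ∈ Finset.range (n+1), (p:ℚ)^j' •
          (e i * e j' - if j' = i then e i else 0))
          = (∑ j' ∈ Finset.range (n+1), (p:ℚ)^j' • (e i * e j'))
            - (∑ j' ∈ Finset.range (n+1), (p:ℚ)^j' • (if j' = i then e i else 0)) := by
        rw [← Finset.sum_sub_distrib]
        exact Finset.sum_congr rfl fun j' _ => smul_sub _ _ _
      rw [hsplit, step1 p i (by omega)]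
      have hite : (∑ j' ∈ Finset.range (n+1), (p:ℚ)^j' • (if j' = i then e i else 0))
          = (p:ℚ)^i • e i := by
        rw [Finset.sum_eq_single i]
        · rw [if_pos rfl]
        · intro b _ hb
          rw [if_neg hb, smul_zero]
        · intro hnotmem
          exact absurd (Finset.mem_range.2 (by omega)) hnotmem
      rw [hite, sub_self]
    have := EulAux.vec_extract (n+1)
      (fun j' => e i * e j' - if j' = i then e i else 0) h0 j (by omega)
    exact sub_eq_zero.1 this
  by_cases hij : i = j
  · subst hij
    simpa using step2
  · rw [if_neg hij, step2, if_neg (fun hji => hij hji.symm)]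
end

section
/- For all positive integers k, l, and any signed permutation π ∈ B_n: C(2kl+k+l+n-des(π), n) = Σ_{στ=π} C(k+n-des(σ), n) · C(l+n-des(τ), n), where the sum ranges over all pairs (σ,τ) ∈ B_n × B_n with στ = π. -/
open Finset
open scoped Classical

/-- The underlying set `{-n, ..., n}` of the hyperoctahedral group `B_n`. -/
noncomputable def Bset (n : ℕ) : Finset ℤ := Finset.Icc (-(n : ℤ)) n

/-- Negation as a map of `{-n, ..., n}` to itself. -/
def negB (n : ℕ) (s : Bset n) : Bset n :=
  ⟨-(s : ℤ), by
    have h := s.2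
    simp only [Bset, Finset.mem_Icc] at h ⊢
    omega⟩

/-- A permutation of `{-n, ..., n}` is a signed permutation if `π(-s) = -π(s)`. -/
def IsSigned (n : ℕ) (π : Equiv.Perm (Bset n)) : Prop :=
  ∀ s : Bset n, π (negB n s) = negB n (π s)

/-- The value `π(z)` of a permutation of `{-n, ..., n}` at an integer `z`. -/
noncomputable def bval (n : ℕ) (π : Equiv.Perm (Bset n)) (z : ℤ) : ℤ :=
  if h : z ∈ Bset n then ((π ⟨z, h⟩ : Bset n) : ℤ) else z

/-- The type B descent set: positions `0 ≤ s ≤ n-1` with `π(s) > π(s+1)`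
(note `π(0) = 0` for a signed permutation). -/
noncomputable def desSetB (n : ℕ) (π : Equiv.Perm (Bset n)) : Finset ℕ :=
  (Finset.range n).filter (fun s => bval n π ((s : ℤ) + 1) < bval n π (s : ℤ))

/-- The type B descent number. -/
noncomputable def desB (n : ℕ) (π : Equiv.Perm (Bset n)) : ℕ := (desSetB n π).card

/-- The augmented descent set: ordinary type B descents, together with `n`
if `π(n) > 0`. -/
noncomputable def aDesSetB (n : ℕ) (π : Equiv.Perm (Bset n)) : Finset ℕ :=
  (Finset.range (n + 1)).filter
    (fun s => if s < n then bval n π ((s : ℤ) + 1) < bval n π (s : ℤ)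
              else 0 < bval n π (n : ℤ))

/-- The augmented descent number. -/
noncomputable def adesB (n : ℕ) (π : Equiv.Perm (Bset n)) : ℕ := (aDesSetB n π).card


namespace ChowAux

lemma mem_Bset {n : ℕ} {z : ℤ} : z ∈ Bset n ↔ -(n:ℤ) ≤ z ∧ z ≤ n := Finset.mem_Icc

lemma bval_mem {n : ℕ} {π : Equiv.Perm (Bset n)} {z : ℤ} (hz : z ∈ Bset n) :
    bval n π z ∈ Bset n := by
  rw [bval, dif_pos hz]; exact (π ⟨z, hz⟩).2

lemma bval_of_mem {n : ℕ} (π : Equiv.Perm (Bset n)) {z : ℤ} (hz : z ∈ Bset n) :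
    bval n π z = ((π ⟨z, hz⟩ : Bset n) : ℤ) := dif_pos hz

lemma bval_of_not_mem {n : ℕ} (π : Equiv.Perm (Bset n)) {z : ℤ} (hz : z ∉ Bset n) :
    bval n π z = z := dif_neg hz

lemma bval_inj {n : ℕ} (π : Equiv.Perm (Bset n)) {z w : ℤ} (hz : z ∈ Bset n)
    (hw : w ∈ Bset n) (h : bval n π z = bval n π w) : z = w := by
  rw [bval_of_mem π hz, bval_of_mem π hw] at h
  have h2 := π.injective (Subtype.ext h)
  exact congrArg Subtype.val h2

lemma bval_mul {n : ℕ} (σ τ : Equiv.Perm (Bset n)) (z : ℤ) :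
    bval n (σ * τ) z = bval n σ (bval n τ z) := by
  by_cases hz : z ∈ Bset n
  · have h1 : ((τ ⟨z, hz⟩ : Bset n) : ℤ) ∈ Bset n := (τ ⟨z, hz⟩).2
    rw [bval_of_mem (σ * τ) hz, bval_of_mem τ hz, bval_of_mem σ h1]
    rfl
  · rw [bval_of_not_mem _ hz, bval_of_not_mem τ hz, bval_of_not_mem σ hz]

lemma bval_neg {n : ℕ} {π : Equiv.Perm (Bset n)} (hπ : IsSigned n π) (z : ℤ) :
    bval n π (-z) = - bval n π z := by
  by_cases hz : z ∈ Bset n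
  · have hz' : -z ∈ Bset n := by rw [mem_Bset] at hz ⊢; omega
    rw [bval_of_mem π hz, bval_of_mem π hz']
    have : (⟨-z, hz'⟩ : Bset 

n) = negB n ⟨z, hz⟩ := rfl
    rw [this, hπ ⟨z, hz⟩]
    rfl
  · have hz' : -z ∉ Bset n := by rw [mem_Bset] at hz ⊢; omega
    rw [bval_of_not_mem π hz, bval_of_not_mem π hz']

lemma bval_zero {n : ℕ} {π : Equiv.Perm (Bset n)} (hπ : IsSigned n π) :
    bval n π 0 = 0 := by
  have := bval_neg hπ 0
  rw [neg_zero] at this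
  omega

lemma isSigned_mul {n : ℕ} {σ τ : Equiv.Perm (Bset n)} (hσ : IsSigned n σ)
    (hτ : IsSigned n τ) : IsSigned n (σ * τ) := by
  intro s
  show σ (τ (negB n s)) = negB n (σ (τ s))
  rw [hτ s, hσ (τ s)]

lemma isSigned_inv {n : ℕ} {σ : Equiv.Perm (Bset n)} (hσ : IsSigned n σ) :
    IsSigned n σ⁻¹ := by
  intro s
  apply σ.injective
  have h1 : σ (σ⁻¹ (negB n s)) = negB n s := Equiv.apply_symm_apply σ _
  have h2 : σ (negB n (σ⁻¹ s)) = negB n (σ (σ⁻¹ s)) := hσ _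
  rw [h1, h2]; exact congrArg (negB n) (Equiv.apply_symm_apply σ s).symm

lemma bval_inv_bval {n : ℕ} (σ : Equiv.Perm (Bset n)) (z : ℤ) :
    bval n σ⁻¹ (bval n σ z) = z := by
  have h : σ⁻¹ * σ = 1 := inv_mul_cancel σ
  rw [← bval_mul, h]
  by_cases hz : z ∈ Bset n
  · rw [bval_of_mem 1 hz]; rfl
  · exact bval_of_not_mem 1 hz

lemma abs_bval_le {n : ℕ} (π : Equiv.Perm (Bset n)) {z : ℤ} (hz : z ∈ Bset n) :
    -(n:ℤ) ≤ bval n π z ∧ bval n π z ≤ n := mem_Bset.mp (bval_mem hz)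

end ChowAux

namespace ChowAux

/-- Odd extension of a tuple `f : Fin n → ℤ` to a function on `ℤ`:
`valAt n f z = f (z-1)` for `1 ≤ z ≤ n`, odd, and `0` elsewhere. -/
def valAt (n : ℕ) (f : Fin n → ℤ) (z : ℤ) : ℤ :=
  if h : 1 ≤ z ∧ z ≤ (n : ℤ) then f ⟨(z - 1).toNat, by omega⟩
  else if h2 : 1 ≤ -z ∧ -z ≤ (n : ℤ) then - f ⟨(-z - 1).toNat, by omega⟩ else 0

lemma valAt_pos {n : ℕ} (f : Fin n → ℤ) {z : ℤ} (h : 1 ≤ z ∧ z ≤ (n : ℤ)) :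
    valAt n f z = f ⟨(z - 1).toNat, by omega⟩ := dif_pos h

lemma valAt_neg {n : ℕ} (f : Fin n → ℤ) (z : ℤ) :
    valAt n f (-z) = - valAt n f z := by
  suffices h : ∀ w : ℤ, 0 ≤ w → valAt n f (-w) = - valAt n f w by
    rcases le_or_gt 0 z with hz | hz
    · exact h z hz
    · have h2 := h (-z) (by omega)
      rw [neg_neg] at h2
      omega
  intro w hw
  rcases eq_or_lt_of_le hw with h0 | h0
  · rw [← h0]
    simp [valAt]
  · by_cases h1 : w ≤ (n : ℤ)
    · rw [valAt_pos f ⟨by omega, h1⟩]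
      rw [valAt, dif_neg (by omega), dif_pos (by omega : 1 ≤ -(-w) ∧ -(-w) ≤ (n : ℤ))]
      have e : (- -w - 1).toNat = (w - 1).toNat := by omega
      simp only [e]
    · have hz : w ∉ Bset n := by rw [mem_Bset]; omega
      have hz' : -w ∉ Bset n := by rw [mem_Bset]; omega
      rw [mem_Bset] at hz hz'
      rw [valAt, dif_neg (by omega), dif_neg (by omega), valAt, dif_neg (by omega),
        dif_neg (by omega)]
      simp

lemma valAt_coe {n : ℕ} (f : Fin n → ℤ) (j : Fin n) :
    valAt n f ((j : ℤ) + 1) = f j := by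
  have hj : 1 ≤ (j : ℤ) + 1 ∧ (j : ℤ) + 1 ≤ (n : ℤ) := by
    have := j.2; omega
  rw [valAt_pos f hj]
  congr 1
  apply Fin.ext
  simp

lemma valAt_zero {n : ℕ} (f : Fin n → ℤ) : valAt n f 0 = 0 := by simp [valAt]

lemma valAt_out {n : ℕ} (f : Fin n → ℤ) {z : ℤ} (h : z ∉ Bset n) : valAt n f z = 0 := by
  rw [mem_Bset] at h
  rw [valAt, dif_neg (by omega), dif_neg (by omega)]

lemma abs_valAt_le {n : ℕ} {f : Fin n → ℤ} {x : ℤ} (hx : 0 ≤ x)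
    (hf : ∀ j, -x ≤ f j ∧ f j ≤ x) (z : ℤ) :
    -x ≤ valAt n f z ∧ valAt n f z ≤ x := by
  rw [valAt]
  split_ifs with h1 h2
  · exact hf _
  · have := hf ⟨(-z - 1).toNat, by omega⟩
    omega
  · omega

lemma valAt_add_mul {n : ℕ} (a b : Fin n → ℤ) (c : ℤ) (z : ℤ) :
    valAt n (fun j => a j + c * b j) z = valAt n a z + c * valAt n b z := by
  rw [valAt, valAt, valAt]
  split_ifs with h1 h2 <;> ring

/-- `valAt` of a tuple built by composing `q` with positions of a signed `σ`. -/
lemma valAt_comp {n : ℕ} {σ : Equiv.Perm (Bset n)} (hσ : IsSigned n σ)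
    (q : Fin n → ℤ) (z : ℤ) :
    valAt n (fun i => valAt n q (bval n σ ((i : ℤ) + 1))) z
      = valAt n q (bval n σ z) := by
  rcases lt_trichotomy z 0 with h | h | h
  · by_cases h1 : 1 ≤ -z ∧ -z ≤ (n : ℤ)
    · rw [valAt, dif_neg (by omega), dif_pos h1]
      have e1 : (((⟨(-z - 1).toNat, by omega⟩ : Fin n) : ℤ) + 1) = -z := by
        simp; omega
      rw [e1]
      rw [bval_neg hσ, valAt_neg, neg_neg]
    · have hz : z ∉ Bset n := by rw [mem_Bset]; omega
      rw [valAt_out _ hz, bval_of_not_mem σ hz, valAt_out _ hz]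
  · subst h
    rw [valAt_zero, bval_zero hσ, valAt_zero]
  · by_cases h1 : 1 ≤ z ∧ z ≤ (n : ℤ)
    · rw [valAt, dif_pos h1]
      have e1 : (((⟨(z - 1).toNat, by omega⟩ : Fin n) : ℤ) + 1) = z := by
        simp; omega
      rw [e1]
    · have hz : z ∉ Bset n := by rw [mem_Bset]; omega
      rw [valAt_out _ hz, bval_of_not_mem σ hz, valAt_out _ hz]

/-- Decoding comparisons of the combined key `(2N+1)*u + a` (lexicographic). -/
lemma lex_lt {N u v a b : ℤ} (ha : -N ≤ a ∧ a ≤ N) (hb : -N ≤ b ∧ b ≤ N) :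
    (2 * N + 1) * u + a < (2 * N + 1) * v + b ↔ u < v ∨ (u = v ∧ a < b) := by
  have hN : 0 ≤ N := by omega
  constructor
  · intro h
    rcases lt_trichotomy u v with hc | hc | hc
    · exact Or.inl hc
    · subst hc
      exact Or.inr ⟨rfl, by linarith⟩
    · exfalso
      have : (2 * N + 1) * (v + 1) ≤ (2 * N + 1) * u :=
        mul_le_mul_of_nonneg_left (by omega) (by omega)
      nlinarith
  · intro h
    rcases h with hc | ⟨hc, hc2⟩
    · have : (2 * N + 1) * (u + 1) ≤ (2 * N + 1) * v :=
        mul_le_mul_of_nonneg_left (by omega) (by omega)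
      nlinarith
    · subst hc
      linarith

end ChowAux

namespace ChowAux

/-- The combined sort key `(2n+1)·f(z) + z` (lexicographic in `(f(z), z)`). -/
def keyf (n : ℕ) (f : Fin n → ℤ) (z : ℤ) : ℤ := (2 * (n : ℤ) + 1) * valAt n f z + z

lemma keyf_neg (n : ℕ) (f : Fin n → ℤ) (z : ℤ) : keyf n f (-z) = - keyf n f z := by
  rw [keyf, keyf, valAt_neg]; ring

lemma keyf_lt_iff {n : ℕ} {f : Fin n → ℤ} {z w : ℤ} (hz : z ∈ Bset n) (hw : w ∈ Bset n) :
    keyf n f z < keyf n f w ↔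
      valAt n f z < valAt n f w ∨ (valAt n f z = valAt n f w ∧ z < w) := by
  rw [mem_Bset] at hz hw
  exact lex_lt ⟨hz.1, hz.2⟩ ⟨hw.1, hw.2⟩

lemma keyf_inj {n : ℕ} {f : Fin n → ℤ} {z w : ℤ} (hz : z ∈ Bset n) (hw : w ∈ Bset n)
    (h : keyf n f z = keyf n f w) : z = w := by
  rcases lt_trichotomy z w with hc | hc | hc
  · have := (keyf_lt_iff (f := f) hz hw).mpr
    rcases lt_trichotomy (valAt n f z) (valAt n f w) with h2 | h2 | h2
    · exact absurd (this (Or.inl h2)) (by omega)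
    · exact absurd (this (Or.inr ⟨h2, hc⟩)) (by omega)
    · have h3 := (keyf_lt_iff (f := f) hw hz).mpr (Or.inl h2)
      omega
  · exact hc
  · have := (keyf_lt_iff (f := f) hw hz).mpr
    rcases lt_trichotomy (valAt n f w) (valAt n f z) with h2 | h2 | h2
    · exact absurd (this (Or.inl h2)) (by omega)
    · exact absurd (this (Or.inr ⟨h2, hc⟩)) (by omega)
    · have h3 := (keyf_lt_iff (f := f) hz hw).mpr (Or.inl h2)
      omega

/-- Key-monotonicity of a permutation w.r.t. the sort key of `f`. -/
def KeyMono (n : ℕ) (f : Fin n → ℤ) (π : Equiv.Perm (Bset n)) : Prop :=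
  ∀ a b : ℤ, a ∈ Bset n → b ∈ Bset n → a < b → keyf n f (bval n π a) < keyf n f (bval n π b)

lemma card_BsetType (n : ℕ) : Fintype.card (Bset n) = 2 * n + 1 := by
  rw [Fintype.card_coe]
  rw [Bset, Int.card_Icc]
  omega

lemma strictMono_perm_eq_refl {α : Type*} [LinearOrder α] [Fintype α]
    (g : Equiv.Perm α) (h : StrictMono g) : g = 1 := by
  have hsymm : StrictMono (g.symm : α → α) := by
    intro a b hab
    rcases lt_trichotomy (g.symm a) (g.symm b) with hc | hc | hc
    · exact hc
    · exfalso
      have h2 : a = b := by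
        have := congrArg g hc
        simpa using this
      exact absurd h2 hab.ne
    · exfalso
      have h2 := h hc
      rw [Equiv.apply_symm_apply, Equiv.apply_symm_apply] at h2
      exact absurd hab (not_lt_of_gt h2)
  have h1 : ∀ x : α, x ≤ g x := fun x => h.le_apply
  have h2 : ∀ x : α, x ≤ g.symm x := fun x => hsymm.le_apply
  ext x
  have h3 := h2 (g x)
  rw [Equiv.symm_apply_apply] at h3
  have h4 : g x = x := le_antisymm h3 (h1 x)
  simp [h4]

/-- Two key-monotone permutations are equal. -/
lemma keyMono_unique {n : ℕ} {f : Fin n → ℤ} {σ σ' : Equiv.Perm (Bset n)}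
    (h : KeyMono n f σ) (h' : KeyMono n f σ') : σ' = σ := by
  have hrev : ∀ a b : Bset n, keyf n f ((σ a : ℤ)) < keyf n f ((σ b : ℤ)) → a < b := by
    intro a b hk
    rcases lt_trichotomy a b with hc | hc | hc
    · exact hc
    · exfalso; rw [hc] at hk; exact lt_irrefl _ hk
    · exfalso
      have := h (b : ℤ) (a : ℤ) b.2 a.2 (Subtype.coe_lt_coe.mpr hc)
      rw [bval_of_mem σ a.2, bval_of_mem σ b.2] at this
      simp only [Subtype.coe_eta] at this
      omega
  have key : StrictMono (fun x => σ.symm (σ' x)) := by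
    intro a b hab
    have h1 := h' (a : ℤ) (b : ℤ) a.2 b.2 (Subtype.coe_lt_coe.mpr hab)
    rw [bval_of_mem σ' a.2, bval_of_mem σ' b.2] at h1
    simp only [Subtype.coe_eta] at h1
    apply hrev
    rw [Equiv.apply_symm_apply, Equiv.apply_symm_apply]
    exact h1
  have := strictMono_perm_eq_refl (σ'.trans σ.symm) key
  have h2 : σ'.trans σ.symm = 1 := this
  ext x
  have h3 := congrArg (fun (e : Equiv.Perm (Bset n)) => σ (e x)) h2
  simp only [Equiv.trans_apply, Equiv.apply_symm_apply, Equiv.Perm.coe_one, id_eq] at h3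
  rw [h3]

end ChowAux

namespace ChowAux

/-- The image of the key function on `Bset n`. -/
noncomputable def imageKey (n : ℕ) (f : Fin n → ℤ) : Finset ℤ :=
  Finset.image (fun z : Bset n => keyf n f (z : ℤ)) Finset.univ

lemma keyS_inj (n : ℕ) (f : Fin n → ℤ) :
    Function.Injective (fun z : Bset n => keyf n f (z : ℤ)) := by
  intro a b h
  exact Subtype.ext (keyf_inj a.2 b.2 h)

lemma imageKey_card (n : ℕ) (f : Fin n → ℤ) : (imageKey n f).card = 2 * n + 1 := by
  rw [imageKey, Finset.card_image_of_injective _ (keyS_inj n f), Finset.card_univ,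
    card_BsetType]

/-- `Bset n` is equivalent to the image of the key function. -/
noncomputable def keyEquiv (n : ℕ) (f : Fin n → ℤ) :
    (Bset n) ≃ {y // y ∈ imageKey n f} :=
  Equiv.ofBijective
    (fun z => ⟨keyf n f (z : ℤ), Finset.mem_image_of_mem _ (Finset.mem_univ z)⟩)
    (by
      constructor
      · intro a b h
        exact keyS_inj n f (congrArg Subtype.val h)
      · rintro ⟨y, hy⟩
        rw [imageKey, Finset.mem_image] at hy
        obtain ⟨z, _, hz⟩ := hy
        exact ⟨z, Subtype.ext hz⟩)

lemma keyEquiv_symm_apply (n : ℕ) (f : Fin n → ℤ) (y : {y // y ∈ imageKey n f}) :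
    keyf n f (((keyEquiv n f).symm y : Bset n) : ℤ) = (y : ℤ) := by
  have := congrArg Subtype.val ((keyEquiv n f).apply_symm_apply y)
  exact this

/-- The canonical ("sorting") signed permutation associated to a tuple `f`. -/
noncomputable def canPerm (n : ℕ) (f : Fin n → ℤ) : Equiv.Perm (Bset n) :=
  ((Fintype.orderIsoFinOfCardEq (Bset n) (card_BsetType n)).symm.toEquiv).trans
    (((imageKey n f).orderIsoOfFin (imageKey_card n f)).toEquiv.trans
      (keyEquiv n f).symm)

lemma canPerm_keyMono (n : ℕ) (f : Fin n → ℤ) : KeyMono n f (canPerm n f) := by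
  intro a b ha hb hab
  rw [bval_of_mem _ ha, bval_of_mem _ hb]
  set e1 := Fintype.orderIsoFinOfCardEq (Bset n) (card_BsetType n)
  set e2 := (imageKey n f).orderIsoOfFin (imageKey_card n f)
  have h1 : canPerm n f ⟨a, ha⟩ = (keyEquiv n f).symm (e2 (e1.symm ⟨a, ha⟩)) := rfl
  have h2 : canPerm n f ⟨b, hb⟩ = (keyEquiv n f).symm (e2 (e1.symm ⟨b, hb⟩)) := rfl
  rw [h1, h2, keyEquiv_symm_apply, keyEquiv_symm_apply]
  have hlt : (⟨a, ha⟩ : Bset n) < ⟨b, hb⟩ := Subtype.mk_lt_mk.mpr hab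
  have h3 : e1.symm ⟨a, ha⟩ < e1.symm ⟨b, hb⟩ := by
    rw [OrderIso.lt_iff_lt]
    exact hlt
  have h4 : e2 (e1.symm ⟨a, ha⟩) < e2 (e1.symm ⟨b, hb⟩) := by
    rw [OrderIso.lt_iff_lt]
    exact h3
  exact Subtype.coe_lt_coe.mpr h4

/-- Negation as a permutation of `Bset n`. -/
def negE (n : ℕ) : Equiv.Perm (Bset n) where
  toFun := negB n
  invFun := negB n
  left_inv := fun s => Subtype.ext (neg_neg _)
  right_inv := fun s => Subtype.ext (neg_neg _)

lemma canPerm_isSigned (n : ℕ) (f : Fin n → ℤ) : IsSigned n (canPerm n f) := by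
  set π := canPerm n f with hπd
  set π' := (negE n).trans (π.trans (negE n)) with hπ'
  have hKM : KeyMono n f π' := by
    intro a b ha hb hab
    have ha' : -a ∈ Bset n := by rw [mem_Bset] at ha ⊢; omega
    have hb' : -b ∈ Bset n := by rw [mem_Bset] at hb ⊢; omega
    have e1 : bval n π' a = - bval n π (-a) := by
      rw [bval_of_mem _ ha, bval_of_mem _ ha']
      rfl
    have e2 : bval n π' b = - bval n π (-b) := by
      rw [bval_of_mem _ hb, bval_of_mem _ hb']
      rfl
    rw [e1, e2, keyf_neg, keyf_neg]
    have hx := canPerm_keyMono n f (-b) (-a) hb' ha' (by omega)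
    rw [← hπd] at hx
    omega
  have hy := canPerm_keyMono n f
  rw [← hπd] at hy
  have heq : π' = π := keyMono_unique hy hKM
  have inv : ∀ t : Bset n, negB n (negB n t) = t := fun t => Subtype.ext (neg_neg _)
  intro s
  have h1 : π' s = π s := by rw [heq]
  have h2 : π' s = negB n (π (negB n s)) := rfl
  rw [h2] at h1
  calc π (negB n s) = negB n (negB n (π (negB n s))) := (inv _).symm
    _ = negB n (π s) := by rw [h1]

/-- Compatibility of a tuple `f` with a signed permutation `π`:
the values of (the odd extension of) `f` along `π(0), π(1), …, π(n)` are weakly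
increasing, and strictly increasing across descents of `π`. -/
def Compat (n : ℕ) (f : Fin n → ℤ) (π : Equiv.Perm (Bset n)) : Prop :=
  ∀ s : ℕ, s < n →
    valAt n f (bval n π (s : ℤ)) ≤ valAt n f (bval n π ((s : ℤ) + 1)) ∧
    (bval n π ((s : ℤ) + 1) < bval n π (s : ℤ) →
      valAt n f (bval n π (s : ℤ)) < valAt n f (bval n π ((s : ℤ) + 1)))

lemma canPerm_compat (n : ℕ) (f : Fin n → ℤ) : Compat n f (canPerm n f) := by
  intro s hs
  have ha : (s : ℤ) ∈ Bset n := by rw [mem_Bset]; omega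
  have hb : (s : ℤ) + 1 ∈ Bset n := by rw [mem_Bset]; omega
  have h := canPerm_keyMono n f (s : ℤ) ((s : ℤ) + 1) ha hb (by omega)
  rw [keyf_lt_iff (bval_mem ha) (bval_mem hb)] at h
  constructor
  · rcases h with h | ⟨h, _⟩
    · omega
    · omega
  · intro hd
    rcases h with h | ⟨_, h2⟩
    · exact h
    · omega

lemma keyMono_of_compat {n : ℕ} {f : Fin n → ℤ} {π : Equiv.Perm (Bset n)}
    (hπ : IsSigned n π) (hc : Compat n f π) : KeyMono n f π := by
  have hcons : ∀ a : ℤ, -(n : ℤ) ≤ a → a + 1 ≤ n →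
      keyf n f (bval n π a) < keyf n f (bval n π (a + 1)) := by
    have hpos : ∀ a : ℤ, 0 ≤ a → a + 1 ≤ n →
        keyf n f (bval n π a) < keyf n f (bval n π (a + 1)) := by
      intro a h0 h1
      have hs : (a.toNat : ℤ) = a := by omega
      have hsn : a.toNat < n := by omega
      have hcc := hc a.toNat hsn
      rw [hs] at hcc
      have ha : a ∈ Bset n := by rw [mem_Bset]; omega
      have hb : a + 1 ∈ Bset n := by rw [mem_Bset]; omega
      rw [keyf_lt_iff (bval_mem ha) (bval_mem hb)]
      rcases eq_or_lt_of_le hcc.1 with he | hlt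
      · right
        refine ⟨he, ?_⟩
        have hne : bval n π a ≠ bval n π (a + 1) := by
          intro hx
          exact absurd (bval_inj π ha hb hx) (by omega)
        rcases lt_trichotomy (bval n π a) (bval n π (a + 1)) with hy | hy | hy
        · exact hy
        · exact absurd hy hne
        · exact absurd (hcc.2 hy) (by omega)
      · exact Or.inl hlt
    intro a h0 h1
    rcases le_or_gt 0 a with hcase | hcase
    · exact hpos a hcase h1
    · set b := -a - 1 with hb
      have hb0 : 0 ≤ b := by omega
      have hb1 : b + 1 ≤ n := by omega
      have h := hpos b hb0 hb1
      have e1 : bval n π a = - bval n π (b + 1) := by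
        rw [show a = -(b + 1) by omega, bval_neg hπ]
      have e2 : bval n π (a + 1) = - bval n π b := by
        rw [show a + 1 = -b by omega, bval_neg hπ]
      rw [e1, e2, keyf_neg, keyf_neg]
      omega
  have hchain : ∀ m : ℕ, ∀ a : ℤ, -(n : ℤ) ≤ a → a + m + 1 ≤ n →
      keyf n f (bval n π a) < keyf n f (bval n π (a + m + 1)) := by
    intro m
    induction m with
    | zero =>
      intro a h0 h1
      have := hcons a h0 (by push_cast at h1 ⊢; omega)
      convert this using 3
      push_cast
      ring
    | succ m ih =>
      intro a h0 h1
      have step1 := ih a h0 (by push_cast at h1 ⊢; omega)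
      have step2 := hcons (a + m + 1) (by omega) (by push_cast at h1 ⊢; omega)
      have e : a + (m + 1 : ℕ) + 1 = (a + m + 1) + 1 := by push_cast; ring
      rw [e]
      omega
  intro a b ha hb hab
  rw [mem_Bset] at ha hb
  have e : b = a + ((b - a - 1).toNat : ℤ) + 1 := by omega
  rw [e]
  exact hchain _ a (by omega) (by omega)

/-- A signed permutation compatible with `f` is unique (it is `canPerm`). -/
lemma compat_unique {n : ℕ} {f : Fin n → ℤ} {π : Equiv.Perm (Bset n)}
    (hπ : IsSigned n π) (hc : Compat n f π) : π = canPerm n f :=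
  keyMono_unique (canPerm_keyMono n f) (keyMono_of_compat hπ hc)

end ChowAux

namespace ChowAux

open Finset

/-- The set of tuples bounded by `x` and compatible with `π`. -/
noncomputable def CompSet (n x : ℕ) (π : Equiv.Perm (Bset n)) : Finset (Fin n → ℤ) :=
  (Fintype.piFinset fun _ : Fin n => Finset.Icc (-(x : ℤ)) (x : ℤ)).filter
    (fun f => Compat n f π)

/-- Number of descents of `π` among positions `0,…,s`. -/
noncomputable def acnt (n : ℕ) (π : Equiv.Perm (Bset n)) (s : ℕ) : ℕ :=
  ((Finset.range (s + 1)).filter (fun j => j ∈ desSetB n π)).card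

lemma acnt_succ (n : ℕ) (π : Equiv.Perm (Bset n)) (s : ℕ) :
    acnt n π (s + 1) = acnt n π s + (if s + 1 ∈ desSetB n π then 1 else 0) := by
  rw [acnt, acnt, Finset.range_add_one, Finset.filter_insert]
  split_ifs with h
  · rw [Finset.card_insert_of_notMem]
    simp
  · rfl

lemma acnt_zero (n : ℕ) (π : Equiv.Perm (Bset n)) :
    acnt n π 0 = if 0 ∈ desSetB n π then 1 else 0 := by
  rw [acnt]
  simp [Finset.range_one, Finset.filter_singleton]
  split_ifs <;> rfl

lemma acnt_le (n : ℕ) (π : Equiv.Perm (Bset n)) (s : ℕ) : acnt n π s ≤ desB n π :=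
  Finset.card_le_card (fun j hj => (Finset.mem_filter.mp hj).2)

lemma acnt_le_self (n : ℕ) (π : Equiv.Perm (Bset n)) (s : ℕ) : acnt n π s ≤ s + 1 := by
  have := Finset.card_le_card (Finset.filter_subset (fun j => j ∈ desSetB n π)
    (Finset.range (s + 1)))
  simpa [acnt] using this

lemma desB_le (n : ℕ) (π : Equiv.Perm (Bset n)) : desB n π ≤ n := by
  have h : desSetB n π ⊆ Finset.range n := Finset.filter_subset _ _
  have := Finset.card_le_card h
  simpa [desB] using this

lemma acnt_tail (n : ℕ) (π : Equiv.Perm (Bset n)) (s : ℕ) (hs : s < n) :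
    desB n π ≤ acnt n π s + (n - s - 1) := by
  classical
  have hsplit : desB n π = acnt n π s + ((desSetB n π).filter (fun j => ¬ j < s + 1)).card := by
    rw [desB]
    rw [← Finset.card_filter_add_card_filter_not (p := fun j => j < s + 1)]
    congr 1
    rw [acnt]
    apply Finset.card_nbij' id id
    · intro a ha
      simp only [Finset.mem_coe, Finset.mem_filter, Finset.mem_range] at ha ⊢
      exact ⟨ha.2, ha.1⟩
    · intro a ha
      simp only [Finset.mem_coe, Finset.mem_filter, Finset.mem_range] at ha ⊢
      exact ⟨ha.2, ha.1⟩
    · intro a _; rfl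
    · intro a _; rfl
  have htail : ((desSetB n π).filter (fun j => ¬ j < s + 1)).card ≤ n - s - 1 := by
    have hsub : (desSetB n π).filter (fun j => ¬ j < s + 1) ⊆
        (Finset.range n).filter (fun j => ¬ j < s + 1) := by
      intro j hj
      simp only [Finset.mem_filter] at hj ⊢
      refine ⟨?_, hj.2⟩
      have := hj.1
      rw [desSetB, Finset.mem_filter] at this
      exact this.1
    have hcard : ((Finset.range n).filter (fun j => ¬ j < s + 1)).card = n - s - 1 := by
      have : (Finset.range n).filter (fun j => ¬ j < s + 1) =
          Finset.Ico (s + 1) n := by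
        ext j
        simp [Finset.mem_Ico, Finset.mem_filter, Finset.mem_range]
        omega
      rw [this, Nat.card_Ico]
      omega
    calc ((desSetB n π).filter (fun j => ¬ j < s + 1)).card
        ≤ ((Finset.range n).filter (fun j => ¬ j < s + 1)).card := Finset.card_le_card hsub
      _ = n - s - 1 := hcard
  omega

lemma acnt_last (n : ℕ) (π : Equiv.Perm (Bset n)) (hn : 1 ≤ n) :
    acnt n π (n - 1) = desB n π := by
  rw [acnt, desB]
  congr 1
  rw [show n - 1 + 1 = n by omega]
  ext j
  simp only [Finset.mem_filter, Finset.mem_range]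
  constructor
  · exact fun hj => hj.2
  · intro hj
    have h : desSetB n π ⊆ Finset.range n := Finset.filter_subset _ _
    exact ⟨Finset.mem_range.mp (h hj), hj⟩

/-- Strict-increment chains on `Fin n` grow at least linearly. -/
lemma fin_gap {n : ℕ} {E : Fin n → ℤ}
    (h : ∀ s : ℕ, (hs : s + 1 < n) → E ⟨s, by omega⟩ + 1 ≤ E ⟨s + 1, hs⟩) :
    ∀ (δ : ℕ) (i j : Fin n), (j : ℕ) = (i : ℕ) + δ → E i + δ ≤ E j := by
  intro δ
  induction δ with
  | zero =>
    intro i j hij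
    have : i = j := Fin.ext (by omega)
    rw [this]
    simp
  | succ δ ih =>
    intro i j hij
    have hlt : (i : ℕ) + δ + 1 < n := by omega
    have hj' : ((⟨(i : ℕ) + δ, by omega⟩ : Fin n) : ℕ) = (i : ℕ) + δ := rfl
    have h1 := ih i ⟨(i : ℕ) + δ, by omega⟩ rfl
    have h2 := h ((i : ℕ) + δ) hlt
    have hjj : j = ⟨(i : ℕ) + δ + 1, hlt⟩ := by
      apply Fin.ext
      show (j : ℕ) = (i : ℕ) + δ + 1
      omega
    rw [hjj]
    push_cast
    push_cast at h1
    omega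

lemma fin_strictMono {n : ℕ} {E : Fin n → ℤ}
    (h : ∀ s : ℕ, (hs : s + 1 < n) → E ⟨s, by omega⟩ + 1 ≤ E ⟨s + 1, hs⟩) :
    StrictMono E := by
  intro i j hij
  have hij' : (i : ℕ) < (j : ℕ) := hij
  have := fin_gap h ((j : ℕ) - (i : ℕ)) i j (by omega)
  have hd : (1 : ℤ) ≤ ((j : ℕ) - (i : ℕ) : ℕ) := by
    have : 1 ≤ (j : ℕ) - (i : ℕ) := by omega
    exact_mod_cast this
  omega

end ChowAux

namespace ChowAux

open Finset

variable {n x : ℕ} {π : Equiv.Perm (Bset n)} {f : Fin n → ℤ} {A : Finset ℤ}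

/-- The strictly increasing tuple associated to a compatible tuple `f`. -/
noncomputable def eF (n : ℕ) (π : Equiv.Perm (Bset n)) (f : Fin n → ℤ) (s : Fin n) : ℤ :=
  valAt n f (bval n π (((s : ℕ) : ℤ) + 1)) + (((s : ℕ) : ℤ) + 1) - (acnt n π (s : ℕ) : ℤ)

noncomputable def theta (n : ℕ) (π : Equiv.Perm (Bset n)) (f : Fin n → ℤ) : Finset ℤ :=
  Finset.image (eF n π f) Finset.univ

/-- The chain tuple extracted from an `n`-subset `A`. -/
noncomputable def cA (n : ℕ) (π : Equiv.Perm (Bset n)) (A : Finset ℤ) (s : Fin n) : ℤ :=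
  (if hA : A.card = n then ((A.orderEmbOfFin hA) s : ℤ) else 0)
    - (((s : ℕ) : ℤ) + 1) + (acnt n π (s : ℕ) : ℤ)

noncomputable def xi (n : ℕ) (π : Equiv.Perm (Bset n)) (A : Finset ℤ) (j : Fin n) : ℤ :=
  valAt n (cA n π A) (bval n π⁻¹ (((j : ℕ) : ℤ) + 1))

lemma eF_mk (s : ℕ) (h : s < n) :
    eF n π f ⟨s, h⟩ = valAt n f (bval n π ((s : ℤ) + 1)) + ((s : ℤ) + 1)
      - (acnt n π s : ℤ) := rfl

lemma G_step (hc : Compat n f π) {s : ℕ} (hs : s < n) :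
    valAt n f (bval n π (s : ℤ)) ≤ valAt n f (bval n π ((s : ℤ) + 1)) ∧
    (s ∈ desSetB n π →
      valAt n f (bval n π (s : ℤ)) + 1 ≤ valAt n f (bval n π ((s : ℤ) + 1))) := by
  obtain ⟨h1, h2⟩ := hc s hs
  refine ⟨h1, fun hd => ?_⟩
  rw [desSetB, Finset.mem_filter] at hd
  have := h2 hd.2
  omega

lemma G_low (hπ : IsSigned n π) (hc : Compat n f π) :
    ∀ s : ℕ, s < n → (acnt n π s : ℤ) ≤ valAt n f (bval n π ((s : ℤ) + 1)) := by
  intro s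
  induction s with
  | zero =>
    intro hs
    have hstep := G_step hc hs
    have h0 : valAt n f (bval n π ((0 : ℕ) : ℤ)) = 0 := by
      norm_num [bval_zero hπ, valAt_zero]
    rw [acnt_zero]
    push_cast at hstep h0 ⊢
    split_ifs with hd
    · have := hstep.2 hd
      omega
    · have := hstep.1
      omega
  | succ t ih =>
    intro hs
    have ht : t < n := by omega
    have h1 := ih ht
    have hstep := G_step hc hs
    have hacnt := acnt_succ n π t
    push_cast at hstep h1 ⊢
    by_cases hd : t + 1 ∈ desSetB n π
    · have h2 := hstep.2 hd
      rw [if_pos hd] at hacnt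
      omega
    · have h2 := hstep.1
      rw [if_neg hd] at hacnt
      omega

lemma compSet_bounds (hf : f ∈ CompSet n x π) :
    (∀ j, -(x : ℤ) ≤ f j ∧ f j ≤ x) ∧ Compat n f π := by
  rw [CompSet, Finset.mem_filter, Fintype.mem_piFinset] at hf
  refine ⟨fun j => ?_, hf.2⟩
  have := hf.1 j
  rwa [Finset.mem_Icc] at this

lemma eF_step (hf : f ∈ CompSet n x π) :
    ∀ s : ℕ, (hs : s + 1 < n) → eF n π f ⟨s, by omega⟩ + 1 ≤ eF n π f ⟨s + 1, hs⟩ := by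
  intro s hs
  obtain ⟨-, hc⟩ := compSet_bounds hf
  have hstep := G_step hc (show s + 1 < n from hs)
  have hacnt := acnt_succ n π s
  rw [eF_mk, eF_mk]
  push_cast at hstep ⊢
  by_cases hd : s + 1 ∈ desSetB n π
  · have h2 := hstep.2 hd
    rw [if_pos hd] at hacnt
    omega
  · have h2 := hstep.1
    rw [if_neg hd] at hacnt
    omega

lemma theta_card (hf : f ∈ CompSet n x π) : (theta n π f).card = n := by
  rw [theta, Finset.card_image_of_injective _ (fin_strictMono (eF_step hf)).injective,
    Finset.card_univ, Fintype.card_fin]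

lemma theta_mem (hπ : IsSigned n π) (hf : f ∈ CompSet n x π) :
    theta n π f ∈ Finset.powersetCard n (Finset.Icc (1 : ℤ) ((x + n - desB n π : ℕ) : ℤ)) := by
  obtain ⟨hb, hc⟩ := compSet_bounds hf
  rw [Finset.mem_powersetCard]
  refine ⟨?_, theta_card hf⟩
  intro y hy
  rw [theta, Finset.mem_image] at hy
  obtain ⟨s, -, rfl⟩ := hy
  have hn0 : 0 < n := s.pos
  have hval : ∀ z : ℤ, -(x : ℤ) ≤ valAt n f z ∧ valAt n f z ≤ x :=
    abs_valAt_le (by positivity) hb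
  rw [Finset.mem_Icc]
  constructor
  · -- lower bound
    have hgap := fin_gap (eF_step hf) (s : ℕ) ⟨0, hn0⟩ s
      (by show (s : ℕ) = 0 + (s : ℕ); omega)
    have h0 : (1 : ℤ) ≤ eF n π f ⟨0, hn0⟩ := by
      rw [eF_mk]
      have := G_low hπ hc 0 hn0
      push_cast at this ⊢
      omega
    omega
  · -- upper bound
    have hn1 : n - 1 < n := by omega
    have hgap := fin_gap (eF_step hf) (n - 1 - (s : ℕ)) s ⟨n - 1, hn1⟩
      (by show n - 1 = (s : ℕ) + (n - 1 - (s : ℕ)); have := s.2; omega)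
    have hup : eF n π f ⟨n - 1, hn1⟩ ≤ ((x + n - desB n π : ℕ) : ℤ) := by
      rw [eF_mk]
      have h1 := (hval (bval n π (((n - 1 : ℕ) : ℤ) + 1))).2
      have h2 := acnt_last n π hn0
      have h3 := desB_le n π
      push_cast
      omega
    have hd : (0 : ℤ) ≤ ((n - 1 - (s : ℕ) : ℕ) : ℤ) := by positivity
    omega

lemma orderEmb_theta (hf : f ∈ CompSet n x π) (h : (theta n π f).card = n) (s : Fin n) :
    ((theta n π f).orderEmbOfFin h) s = eF n π f s := by
  have := Finset.orderEmbOfFin_unique h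
    (f := eF n π f) (fun t => Finset.mem_image_of_mem _ (Finset.mem_univ t))
    (fin_strictMono (eF_step hf))
  exact (congrFun this s).symm

lemma xi_theta (hπ : IsSigned n π) (hf : f ∈ CompSet n x π) : xi n π (theta n π f) = f := by
  funext j
  have hcard : (theta n π f).card = n := theta_card hf
  have hcA : cA n π (theta n π f)
      = fun s : Fin n => valAt n f (bval n π (((s : ℕ) : ℤ) + 1)) := by
    funext s
    rw [cA, dif_pos hcard, orderEmb_theta hf hcard s, eF]
    ring
  rw [xi, hcA, valAt_comp hπ]
  have hbv : bval n π (bval n π⁻¹ (((j : ℕ) : ℤ) + 1)) = ((j : ℕ) : ℤ) + 1 := by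
    have := bval_inv_bval π⁻¹ (((j : ℕ) : ℤ) + 1)
    rwa [inv_inv] at this
  rw [hbv, valAt_coe]

lemma cA_mk (hA : A.card = n) (s : ℕ) (h : s < n) :
    cA n π A ⟨s, h⟩ = ((A.orderEmbOfFin hA) ⟨s, h⟩ : ℤ) - ((s : ℤ) + 1)
      + (acnt n π s : ℤ) := by
  rw [cA, dif_pos hA]

lemma xi_chain (hπ : IsSigned n π) (A : Finset ℤ) (s : Fin n) :
    valAt n (xi n π A) (bval n π (((s : ℕ) : ℤ) + 1)) = cA n π A s := by
  have hxi : xi n π A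
      = fun i : Fin n => valAt n (cA n π A) (bval n π⁻¹ (((i : ℕ) : ℤ) + 1)) := rfl
  rw [hxi, valAt_comp (isSigned_inv hπ), bval_inv_bval π, valAt_coe]

lemma theta_xi (hπ : IsSigned n π)
    (hA : A ∈ Finset.powersetCard n (Finset.Icc (1 : ℤ) ((x + n - desB n π : ℕ) : ℤ))) :
    theta n π (xi n π A) = A := by
  obtain ⟨hsub, hcard⟩ := Finset.mem_powersetCard.mp hA
  have heF : eF n π (xi n π A) = fun s => ((A.orderEmbOfFin hcard) s : ℤ) := by
    funext s
    rw [eF, xi_chain hπ, cA, dif_pos hcard]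
    ring
  rw [theta, heF]
  apply Finset.coe_injective
  rw [Finset.coe_image, Finset.coe_univ, Set.image_univ]
  exact A.range_orderEmbOfFin hcard

lemma cA_mk' (hA : A.card = n) (t : ℕ) (ht : t < n) :
    cA n π A ⟨t, ht⟩ = (A.orderEmbOfFin hA ⟨t, ht⟩ : ℤ) - ((t : ℤ) + 1)
      + (acnt n π t : ℤ) := by
  rw [cA, dif_pos hA]

lemma cA_mk'' (hA : A.card = n) (t : ℕ) (hs : t + 1 < n) :
    cA n π A ⟨t + 1, hs⟩ = (A.orderEmbOfFin hA ⟨t + 1, hs⟩ : ℤ) - (((t : ℤ) + 1) + 1)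
      + (acnt n π (t + 1) : ℤ) := by
  rw [cA, dif_pos hA]
  push_cast
  ring

lemma hEstep' (hA : A.card = n) (t : ℕ) (ht : t < n) (hs : t + 1 < n) :
    A.orderEmbOfFin hA ⟨t, ht⟩ + 1 ≤ A.orderEmbOfFin hA ⟨t + 1, hs⟩ := by
  have h1 : (⟨t, ht⟩ : Fin n) < ⟨t + 1, hs⟩ := by
    rw [Fin.mk_lt_mk]
    omega
  have := (A.orderEmbOfFin hA).strictMono h1
  omega

lemma xi_mem (hπ : IsSigned n π)
    (hA : A ∈ Finset.powersetCard n (Finset.Icc (1 : ℤ) ((x + n - desB n π : ℕ) : ℤ))) :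
    xi n π A ∈ CompSet n x π := by
  obtain ⟨hsub, hcard⟩ := Finset.mem_powersetCard.mp hA
  have hEmem : ∀ s : Fin n, (1 : ℤ) ≤ A.orderEmbOfFin hcard s ∧
      A.orderEmbOfFin hcard s ≤ ((x + n - desB n π : ℕ) : ℤ) := by
    intro s
    have := hsub (A.orderEmbOfFin_mem hcard s)
    rwa [Finset.mem_Icc] at this
  have hEstep : ∀ s : ℕ, (hs : s + 1 < n) →
      A.orderEmbOfFin hcard ⟨s, by omega⟩ + 1 ≤ A.orderEmbOfFin hcard ⟨s + 1, hs⟩ := by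
    intro s hs
    have h1 : (⟨s, by omega⟩ : Fin n) < ⟨s + 1, hs⟩ := by
      rw [Fin.mk_lt_mk]
      omega
    have := (A.orderEmbOfFin hcard).strictMono h1
    omega
  have hcAb : ∀ s : Fin n, 0 ≤ cA n π A s ∧ cA n π A s ≤ x := by
    intro s
    have hn0 : 0 < n := s.pos
    have hn1 : n - 1 < n := by omega
    have h1 : cA n π A s = (A.orderEmbOfFin hcard s : ℤ) - (((s : ℕ) : ℤ) + 1)
        + (acnt n π (s : ℕ) : ℤ) := by
      rw [cA, dif_pos hcard]
    constructor
    · have hgap := fin_gap hEstep (s : ℕ) ⟨0, hn0⟩ s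
        (by show (s : ℕ) = 0 + (s : ℕ); omega)
      have h0 := (hEmem ⟨0, hn0⟩).1
      have ha : (0 : ℤ) ≤ (acnt n π (s : ℕ) : ℤ) := by positivity
      omega
    · have hgap := fin_gap hEstep (n - 1 - (s : ℕ)) s ⟨n - 1, hn1⟩
        (by show n - 1 = (s : ℕ) + (n - 1 - (s : ℕ)); have := s.2; omega)
      have hup := (hEmem ⟨n - 1, hn1⟩).2
      have ha := acnt_le n π (s : ℕ)
      have hd := desB_le n π
      have hs2 := s.2
      have haZ : (acnt n π (s : ℕ) : ℤ) ≤ (desB n π : ℤ) := by exact_mod_cast ha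
      omega
  rw [CompSet, Finset.mem_filter, Fintype.mem_piFinset]
  have hxval : ∀ z : ℤ, -(x : ℤ) ≤ valAt n (cA n π A) z ∧ valAt n (cA n π A) z ≤ x :=
    abs_valAt_le (by positivity) (fun s => ⟨by have := (hcAb s).1; omega, (hcAb s).2⟩)
  constructor
  · intro j
    rw [Finset.mem_Icc]
    exact hxval _
  · -- compatibility
    intro s hs
    have hR : valAt n (xi n π A) (bval n π ((s : ℤ) + 1)) = cA n π A ⟨s, hs⟩ :=
      xi_chain hπ A ⟨s, hs⟩
    rcases Nat.eq_zero_or_pos s with hs0 | hs0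
    · subst hs0
      have hL : valAt n (xi n π A) (bval n π ((0 : ℕ) : ℤ)) = 0 := by
        norm_num [bval_zero hπ, valAt_zero]
      rw [hL, hR]
      constructor
      · exact (hcAb ⟨0, hs⟩).1
      · intro hdesc
        have hd : (0 : ℕ) ∈ desSetB n π := by
          rw [desSetB, Finset.mem_filter, Finset.mem_range]
          exact ⟨hs, hdesc⟩
        have hz := acnt_zero n π
        rw [if_pos hd] at hz
        rw [cA_mk hcard 0 hs, hz]
        have h0 := (hEmem ⟨0, hs⟩).1
        push_cast
        omega
    · obtain ⟨t, rfl⟩ : ∃ t, s = t + 1 := ⟨s - 1, by omega⟩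
      have ht : t < n := by omega
      have hL : valAt n (xi n π A) (bval n π ((t : ℤ) + 1)) = cA n π A ⟨t, ht⟩ :=
        xi_chain hπ A ⟨t, ht⟩
      have hcast : ((t + 1 : ℕ) : ℤ) = ((t : ℕ) : ℤ) + 1 := by push_cast; ring
      rw [hcast] at hR
      rw [hcast, hL, hR, cA_mk' hcard t ht, cA_mk'' hcard t hs]
      have hEst := hEstep' hcard t ht hs
      have hacnt := acnt_succ n π t
      constructor
      · by_cases hd : t + 1 ∈ desSetB n π
        · rw [if_pos hd] at hacnt
          push_cast
          omega
        · rw [if_neg hd] at hacnt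
          push_cast
          omega
      · intro hdesc
        have hd : t + 1 ∈ desSetB n π := by
          rw [desSetB, Finset.mem_filter, Finset.mem_range]
          refine ⟨hs, ?_⟩
          rw [hcast]
          exact hdesc
        rw [if_pos hd] at hacnt
        push_cast
        omega

/-- The cardinality of the set of `π`-compatible tuples bounded by `x`. -/
lemma card_compSet (n x : ℕ) (π : Equiv.Perm (Bset n)) (hπ : IsSigned n π) :
    (CompSet n x π).card = Nat.choose (x + n - desB n π) n := by
  have h := Finset.card_nbij' (s := CompSet n x π)
    (t := Finset.powersetCard n (Finset.Icc (1 : ℤ) ((x + n - desB n π : ℕ) : ℤ)))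
    (theta n π) (xi n π)
    (fun f hf => theta_mem hπ hf) (fun A hA => xi_mem hπ hA)
    (fun f hf => xi_theta hπ hf) (fun A hA => theta_xi hπ hA)
  rw [h, Finset.card_powersetCard, Int.card_Icc]
  congr 1
  omega

end ChowAux

namespace ChowAux

lemma div_exists (k h : ℤ) (hk : 0 ≤ k) :
    -k ≤ h - (2 * k + 1) * ((h + k) / (2 * k + 1)) ∧
    h - (2 * k + 1) * ((h + k) / (2 * k + 1)) ≤ k := by
  have hb : (0 : ℤ) < 2 * k + 1 := by omega
  have h1 := Int.mul_ediv_add_emod (h + k) (2 * k + 1)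
  have h2 := Int.emod_nonneg (h + k) (by omega : (2 * k + 1 : ℤ) ≠ 0)
  have h3 := Int.emod_lt_of_pos (h + k) hb
  omega

lemma div_eq {k h q r : ℤ} (hk : 0 ≤ k) (he : h = (2 * k + 1) * q + r)
    (hr1 : -k ≤ r) (hr2 : r ≤ k) : (h + k) / (2 * k + 1) = q := by
  have hb : (0 : ℤ) < 2 * k + 1 := by omega
  have := (Int.ediv_emod_unique (a := h + k) (b := 2 * k + 1) (r := r + k) (q := q)
    hb).mpr ⟨by linarith, by omega, by omega⟩
  exact this.1

lemma div_mono {k h h' : ℤ} (hk : 0 ≤ k) (hh : h ≤ h') :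
    (h + k) / (2 * k + 1) ≤ (h' + k) / (2 * k + 1) :=
  Int.ediv_le_ediv (by omega) (by omega)

lemma div_odd (k h : ℤ) (hk : 0 ≤ k) :
    (-h + k) / (2 * k + 1) = -((h + k) / (2 * k + 1)) := by
  obtain ⟨h1, h2⟩ := div_exists k h hk
  apply div_eq hk ?_ (by omega) (by omega : -(h - (2 * k + 1) * ((h + k) / (2 * k + 1))) ≤ k)
  ring

lemma div_bound {k l h : ℤ} (hk : 0 ≤ k) (hl : 0 ≤ l)
    (hb1 : -((2 * k + 1) * l + k) ≤ h) (hb2 : h ≤ (2 * k + 1) * l + k) :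
    -l ≤ (h + k) / (2 * k + 1) ∧ (h + k) / (2 * k + 1) ≤ l := by
  obtain ⟨h1, h2⟩ := div_exists k h hk
  set q := (h + k) / (2 * k + 1) with hq
  constructor
  · by_contra hcon
    push_neg at hcon
    have hle : q + 1 ≤ -l := by omega
    have := mul_le_mul_of_nonneg_left hle (by omega : (0 : ℤ) ≤ 2 * k + 1)
    have hexp : (2 * k + 1) * (-l) = -((2 * k + 1) * l) := by ring
    have hexp2 : (2 * k + 1) * (q + 1) = (2 * k + 1) * q + (2 * k + 1) := by ring
    omega
  · by_contra hcon
    push_neg at hcon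
    have hle : l + 1 ≤ q := by omega
    have := mul_le_mul_of_nonneg_left hle (by omega : (0 : ℤ) ≤ 2 * k + 1)
    have hexp : (2 * k + 1) * (l + 1) = (2 * k + 1) * l + (2 * k + 1) := by ring
    omega

lemma div_zero_k (k : ℤ) (hk : 0 ≤ k) : (0 + k) / (2 * k + 1) = 0 :=
  div_eq hk (by ring) (by omega) hk

end ChowAux

namespace ChowAux

variable {n k l : ℕ}

noncomputable def qF (n k : ℕ) (h : Fin n → ℤ) (j : Fin n) : ℤ :=
  (h j + (k : ℤ)) / (2 * (k : ℤ) + 1)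

noncomputable def fF (n k : ℕ) (h : Fin n → ℤ) (j : Fin n) : ℤ :=
  h j + (-(2 * (k : ℤ) + 1)) * qF n k h j

noncomputable def gF (n k : ℕ) (h : Fin n → ℤ) (i : Fin n) : ℤ :=
  valAt n (qF n k h) (bval n (canPerm n (fF n k h)) ((i : ℤ) + 1))

noncomputable def phiF (n k : ℕ) (σ : Equiv.Perm (Bset n)) (f g : Fin n → ℤ)
    (j : Fin n) : ℤ :=
  f j + (2 * (k : ℤ) + 1) * valAt n g (bval n σ⁻¹ ((j : ℤ) + 1))

lemma bval_bval_inv (σ : Equiv.Perm (Bset n)) (z : ℤ) :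
    bval n σ (bval n σ⁻¹ z) = z := by
  have := bval_inv_bval σ⁻¹ z
  rwa [inv_inv] at this

lemma castX : ((2 * k * l + k + l : ℕ) : ℤ) = (2 * (k : ℤ) + 1) * (l : ℤ) + (k : ℤ) := by
  push_cast
  ring

lemma valAt_qF (h : Fin n → ℤ) (z : ℤ) :
    valAt n (qF n k h) z = (valAt n h z + (k : ℤ)) / (2 * (k : ℤ) + 1) := by
  rcases lt_trichotomy z 0 with hz | hz | hz
  · by_cases h1 : 1 ≤ -z ∧ -z ≤ (n : ℤ)
    · rw [valAt, dif_neg (by omega), dif_pos h1, valAt, dif_neg (by omega), dif_pos h1]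
      rw [qF, div_odd (k : ℤ) _ (by positivity)]
    · have hzz : z ∉ Bset n := by rw [mem_Bset]; omega
      rw [valAt_out _ hzz, valAt_out _ hzz, div_zero_k _ (by positivity)]
  · subst hz
    rw [valAt_zero, valAt_zero, div_zero_k _ (by positivity)]
  · by_cases h1 : 1 ≤ z ∧ z ≤ (n : ℤ)
    · rw [valAt_pos _ h1, valAt_pos _ h1]
      rfl
    · have hzz : z ∉ Bset n := by rw [mem_Bset]; omega
      rw [valAt_out _ hzz, valAt_out _ hzz, div_zero_k _ (by positivity)]

lemma valAt_fF (h : Fin n → ℤ) (z : ℤ) :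
    valAt n (fF n k h) z
      = valAt n h z + (-(2 * (k : ℤ) + 1)) * valAt n (qF n k h) z := by
  have e : fF n k h = fun j => h j + (-(2 * (k : ℤ) + 1)) * qF n k h j := rfl
  rw [e, valAt_add_mul]

lemma fF_bounds (h : Fin n → ℤ) (j : Fin n) :
    -(k : ℤ) ≤ fF n k h j ∧ fF n k h j ≤ k := by
  have e : fF n k h j
      = h j - (2 * (k : ℤ) + 1) * ((h j + (k : ℤ)) / (2 * (k : ℤ) + 1)) := by
    rw [fF, qF]
    ring
  rw [e]
  exact div_exists (k : ℤ) (h j) (by positivity)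

lemma valAt_phiF {σ : Equiv.Perm (Bset n)} (hσ : IsSigned n σ) (f g : Fin n → ℤ) (z : ℤ) :
    valAt n (phiF n k σ f g) z
      = valAt n f z + (2 * (k : ℤ) + 1) * valAt n g (bval n σ⁻¹ z) := by
  have e : phiF n k σ f g = fun j : Fin n =>
      f j + (2 * (k : ℤ) + 1) *
        (fun i : Fin n => valAt n g (bval n σ⁻¹ ((i : ℤ) + 1))) j := rfl
  rw [e, valAt_add_mul, valAt_comp (isSigned_inv hσ)]

lemma valAt_gF (h : Fin n → ℤ) (z : ℤ) :
    valAt n (gF n k h) z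
      = valAt n (qF n k h) (bval n (canPerm n (fF n k h)) z) := by
  have e : gF n k h = fun i : Fin n =>
      valAt n (qF n k h) (bval n (canPerm n (fF n k h)) ((i : ℤ) + 1)) := rfl
  rw [e, valAt_comp (canPerm_isSigned n (fF n k h))]

/-- The forward map lands in the compatible set of the product. -/
lemma phiF_mem {σ τ : Equiv.Perm (Bset n)} (hσ : IsSigned n σ) (hτ : IsSigned n τ)
    {f g : Fin n → ℤ} (hf : f ∈ CompSet n k σ) (hg : g ∈ CompSet n l τ) :
    phiF n k σ f g ∈ CompSet n (2 * k * l + k + l) (σ * τ) := by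
  obtain ⟨hfb, hfc⟩ := compSet_bounds hf
  obtain ⟨hgb, hgc⟩ := compSet_bounds hg
  have hfv : ∀ z : ℤ, -(k : ℤ) ≤ valAt n f z ∧ valAt n f z ≤ k :=
    abs_valAt_le (by positivity) hfb
  have hgv : ∀ z : ℤ, -(l : ℤ) ≤ valAt n g z ∧ valAt n g z ≤ l :=
    abs_valAt_le (by positivity) hgb
  have hπst : ∀ w : ℤ, bval n σ⁻¹ (bval n (σ * τ) w) = bval n τ w := by
    intro w
    rw [bval_mul, bval_inv_bval]
  have hH : ∀ w : ℤ, valAt n (phiF n k σ f g) (bval n (σ * τ) w)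
      = valAt n f (bval n (σ * τ) w)
        + (2 * (k : ℤ) + 1) * valAt n g (bval n τ w) := by
    intro w
    rw [valAt_phiF hσ, hπst]
  rw [CompSet, Finset.mem_filter, Fintype.mem_piFinset]
  constructor
  · intro j
    rw [Finset.mem_Icc]
    have hv := hgv (bval n σ⁻¹ ((j : ℤ) + 1))
    have h1 : (2 * (k : ℤ) + 1) * valAt n g (bval n σ⁻¹ ((j : ℤ) + 1))
        ≤ (2 * (k : ℤ) + 1) * (l : ℤ) :=
      mul_le_mul_of_nonneg_left hv.2 (by positivity)
    have h2 : (2 * (k : ℤ) + 1) * (-(l : ℤ))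
        ≤ (2 * (k : ℤ) + 1) * valAt n g (bval n σ⁻¹ ((j : ℤ) + 1)) :=
      mul_le_mul_of_nonneg_left hv.1 (by positivity)
    have h3 : (2 * (k : ℤ) + 1) * (-(l : ℤ)) = -((2 * (k : ℤ) + 1) * (l : ℤ)) := by ring
    have hfj := hfb j
    rw [phiF, castX]
    omega
  · intro s hs
    have hmem1 : (s : ℤ) ∈ Bset n := by rw [mem_Bset]; omega
    have hmem2 : (s : ℤ) + 1 ∈ Bset n := by rw [mem_Bset]; omega
    have hH1 := hH (s : ℤ)
    have hH2 := hH ((s : ℤ) + 1)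
    have hM := hgc s hs
    have hF1 := hfv (bval n (σ * τ) (s : ℤ))
    have hF2 := hfv (bval n (σ * τ) ((s : ℤ) + 1))
    rcases eq_or_lt_of_le hM.1 with heq | hlt
    · -- tie in the g-chain
      have hlt2 : bval n τ (s : ℤ) < bval n τ ((s : ℤ) + 1) := by
        rcases lt_trichotomy (bval n τ (s : ℤ)) (bval n τ ((s : ℤ) + 1)) with hy | hy | hy
        · exact hy
        · exact absurd (bval_inj τ hmem1 hmem2 hy) (by omega)
        · exact absurd (hM.2 hy) (by omega)
      have hkm := keyMono_of_compat hσ hfc (bval n τ (s : ℤ)) (bval n τ ((s : ℤ) + 1))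
        (bval_mem hmem1) (bval_mem hmem2) hlt2
      rw [← bval_mul, ← bval_mul] at hkm
      rw [keyf_lt_iff (bval_mem hmem1) (bval_mem hmem2)] at hkm
      have hDM : (2 * (k : ℤ) + 1) * valAt n g (bval n τ (s : ℤ))
          = (2 * (k : ℤ) + 1) * valAt n g (bval n τ ((s : ℤ) + 1)) := by rw [heq]
      constructor
      · rcases hkm with hx | ⟨hx, -⟩ <;> omega
      · intro hdesc
        rcases hkm with hx | ⟨-, hx⟩
        · omega
        · omega
    · -- jump in the g-chain
      have h1 : (2 * (k : ℤ) + 1) * (valAt n g (bval n τ (s : ℤ)) + 1)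
          ≤ (2 * (k : ℤ) + 1) * valAt n g (bval n τ ((s : ℤ) + 1)) :=
        mul_le_mul_of_nonneg_left (by omega) (by positivity)
      have h2 : (2 * (k : ℤ) + 1) * (valAt n g (bval n τ (s : ℤ)) + 1)
          = (2 * (k : ℤ) + 1) * valAt n g (bval n τ (s : ℤ)) + (2 * (k : ℤ) + 1) := by
        ring
      constructor
      · omega
      · intro _
        omega

end ChowAux

namespace ChowAux

variable {n k l : ℕ}

lemma fF_mem (h : Fin n → ℤ) : fF n k h ∈ CompSet n k (canPerm n (fF n k h)) := by
  rw [CompSet, Finset.mem_filter, Fintype.mem_piFinset]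
  exact ⟨fun j => Finset.mem_Icc.mpr (fF_bounds h j), canPerm_compat n (fF n k h)⟩

lemma hX_bounds {π : Equiv.Perm (Bset n)} {h : Fin n → ℤ}
    (hh : h ∈ CompSet n (2 * k * l + k + l) π) (j : Fin n) :
    -((2 * (k : ℤ) + 1) * (l : ℤ) + (k : ℤ)) ≤ h j ∧
      h j ≤ (2 * (k : ℤ) + 1) * (l : ℤ) + (k : ℤ) := by
  have := (compSet_bounds hh).1 j
  rw [← castX]
  exact this

lemma qF_bounds {π : Equiv.Perm (Bset n)} {h : Fin n → ℤ}
    (hh : h ∈ CompSet n (2 * k * l + k + l) π) (j : Fin n) :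
    -(l : ℤ) ≤ qF n k h j ∧ qF n k h j ≤ l := by
  obtain ⟨h1, h2⟩ := hX_bounds hh j
  exact div_bound (by positivity) (by positivity) h1 h2

lemma gF_mem {π : Equiv.Perm (Bset n)} (hπ : IsSigned n π) {h : Fin n → ℤ}
    (hh : h ∈ CompSet n (2 * k * l + k + l) π) :
    gF n k h ∈ CompSet n l ((canPerm n (fF n k h))⁻¹ * π) := by
  have hqB := fun j => qF_bounds (l := l) hh j
  have hσh := canPerm_isSigned n (fF n k h)
  have hστ : ∀ w : ℤ, bval n (canPerm n (fF n k h))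
      (bval n ((canPerm n (fF n k h))⁻¹ * π) w) = bval n π w := by
    intro w
    rw [bval_mul, bval_bval_inv]
  have hMg : ∀ w : ℤ, valAt n (gF n k h) (bval n ((canPerm n (fF n k h))⁻¹ * π) w)
      = (valAt n h (bval n π w) + (k : ℤ)) / (2 * (k : ℤ) + 1) := by
    intro w
    rw [valAt_gF, hστ, valAt_qF]
  have hc := (compSet_bounds hh).2
  rw [CompSet, Finset.mem_filter, Fintype.mem_piFinset]
  constructor
  · intro i
    rw [Finset.mem_Icc, gF]
    exact abs_valAt_le (by positivity) hqB _
  · intro s hs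
    have hmem1 : (s : ℤ) ∈ Bset n := by rw [mem_Bset]; omega
    have hmem2 : (s : ℤ) + 1 ∈ Bset n := by rw [mem_Bset]; omega
    have hH := hc s hs
    rw [hMg, hMg]
    constructor
    · exact div_mono (by positivity) hH.1
    · intro hdesc
      have hle := div_mono (k := (k : ℤ)) (by positivity) hH.1
      rcases eq_or_lt_of_le hle with heq | hlt
      · exfalso
        -- a tie in the quotient chain contradicts a descent of τ
        have hkm := canPerm_keyMono n (fF n k h)
          (bval n ((canPerm n (fF n k h))⁻¹ * π) ((s : ℤ) + 1))
          (bval n ((canPerm n (fF n k h))⁻¹ * π) (s : ℤ))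
          (bval_mem hmem2) (bval_mem hmem1) hdesc
        rw [hστ, hστ, keyf_lt_iff (bval_mem hmem2) (bval_mem hmem1)] at hkm
        have hF1 := valAt_fF (k := k) h (bval n π (s : ℤ))
        have hF2 := valAt_fF (k := k) h (bval n π ((s : ℤ) + 1))
        rw [valAt_qF] at hF1 hF2
        have hDM : (2 * (k : ℤ) + 1) *
              ((valAt n h (bval n π (s : ℤ)) + (k : ℤ)) / (2 * (k : ℤ) + 1))
            = (2 * (k : ℤ) + 1) *
              ((valAt n h (bval n π ((s : ℤ) + 1)) + (k : ℤ)) / (2 * (k : ℤ) + 1)) := by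
          rw [heq]
        have hw := hH.1
        have hb1 : (-(2 * (k : ℤ) + 1)) *
              ((valAt n h (bval n π (s : ℤ)) + (k : ℤ)) / (2 * (k : ℤ) + 1))
            = -((2 * (k : ℤ) + 1) *
              ((valAt n h (bval n π (s : ℤ)) + (k : ℤ)) / (2 * (k : ℤ) + 1))) := by
          ring
        have hb2 : (-(2 * (k : ℤ) + 1)) *
              ((valAt n h (bval n π ((s : ℤ) + 1)) + (k : ℤ)) / (2 * (k : ℤ) + 1))
            = -((2 * (k : ℤ) + 1) *
              ((valAt n h (bval n π ((s : ℤ) + 1)) + (k : ℤ)) / (2 * (k : ℤ) + 1))) := by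
          ring
        rcases hkm with hx | ⟨hx, hd2⟩
        · omega
        · have := hH.2 hd2
          omega
      · exact hlt

lemma phiF_inv (h : Fin n → ℤ) :
    phiF n k (canPerm n (fF n k h)) (fF n k h) (gF n k h) = h := by
  funext j
  rw [phiF, valAt_gF, bval_bval_inv, valAt_coe, fF]
  ring

lemma qF_phiF {σ : Equiv.Perm (Bset n)} {f g : Fin n → ℤ}
    (hfb : ∀ j, -(k : ℤ) ≤ f j ∧ f j ≤ k) :
    qF n k (phiF n k σ f g) = fun j : Fin n => valAt n g (bval n σ⁻¹ ((j : ℤ) + 1)) := by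
  funext j
  rw [qF, phiF]
  exact div_eq (by positivity) (by ring) (hfb j).1 (hfb j).2

lemma fF_phiF {σ : Equiv.Perm (Bset n)} {f g : Fin n → ℤ}
    (hfb : ∀ j, -(k : ℤ) ≤ f j ∧ f j ≤ k) :
    fF n k (phiF n k σ f g) = f := by
  funext j
  rw [fF, qF_phiF hfb, phiF]
  ring

lemma canPerm_phiF {σ : Equiv.Perm (Bset n)} {f g : Fin n → ℤ} (hσ : IsSigned n σ)
    (hf : f ∈ CompSet n k σ) :
    canPerm n (fF n k (phiF n k σ f g)) = σ := by
  obtain ⟨hfb, hfc⟩ := compSet_bounds hf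
  rw [fF_phiF hfb]
  exact (compat_unique hσ hfc).symm

lemma gF_phiF {σ : Equiv.Perm (Bset n)} {f g : Fin n → ℤ} (hσ : IsSigned n σ)
    (hf : f ∈ CompSet n k σ) :
    gF n k (phiF n k σ f g) = g := by
  obtain ⟨hfb, hfc⟩ := compSet_bounds hf
  funext i
  rw [gF, canPerm_phiF hσ hf, qF_phiF hfb,
    valAt_comp (isSigned_inv hσ), bval_inv_bval, valAt_coe]

end ChowAux

open ChowAux

/-- Chow's theorem: for positive integers `k, l` and a signed permutation `π ∈ B_n`,
`C(2kl+k+l+n-des(π), n) = Σ_{στ=π} C(k+n-des(σ), n) · C(l+n-des(τ), n)`. -/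
theorem structure_mult_B (n k l : ℕ) (hk : 0 < k) (hl : 0 < l)
    (π : Equiv.Perm (Bset n)) (hπ : IsSigned n π) :
    Nat.choose (2 * k * l + k + l + n - desB n π) n
      = ∑ p ∈ Finset.univ.filter
          (fun p : Equiv.Perm (Bset n) × Equiv.Perm (Bset n) =>
            IsSigned n p.1 ∧ IsSigned n p.2 ∧ p.1 * p.2 = π),
          Nat.choose (k + n - desB n p.1) n *
            Nat.choose (l + n - desB n p.2) n := by
  classical
  set S := Finset.univ.filter
      (fun p : Equiv.Perm (Bset n) × Equiv.Perm (Bset n) =>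
        IsSigned n p.1 ∧ IsSigned n p.2 ∧ p.1 * p.2 = π) with hS
  set T := S.sigma (fun p => (CompSet n k p.1) ×ˢ (CompSet n l p.2)) with hT
  have hbij : (CompSet n (2 * k * l + k + l) π).card = T.card := by
    apply Finset.card_nbij'
      (i := fun h => (⟨(canPerm n (fF n k h), (canPerm n (fF n k h))⁻¹ * π),
        (fF n k h, gF n k h)⟩ :
          Σ _ : Equiv.Perm (Bset n) × Equiv.Perm (Bset n), (Fin n → ℤ) × (Fin n → ℤ)))
      (j := fun w => phiF n k w.1.1 w.2.1 w.2.2)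
    · intro h hh
      rw [hT, Finset.mem_coe, Finset.mem_sigma]
      constructor
      · rw [hS, Finset.mem_filter]
        refine ⟨Finset.mem_univ _, canPerm_isSigned n (fF n k h), ?_, ?_⟩
        · exact isSigned_mul (isSigned_inv (canPerm_isSigned n (fF n k h))) hπ
        · exact mul_inv_cancel_left _ _
      · rw [Finset.mem_product]
        exact ⟨fF_mem h, gF_mem hπ hh⟩
    · rintro ⟨⟨σ, τ⟩, f, g⟩ hw
      rw [hT, Finset.mem_coe, Finset.mem_sigma, hS, Finset.mem_filter, Finset.mem_product] at hw
      obtain ⟨⟨-, hσ, hτ, hmul⟩, hf, hg⟩ := hw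
      have := phiF_mem hσ hτ hf hg
      rw [hmul] at this
      exact this
    · intro h hh
      exact phiF_inv h
    · rintro ⟨⟨σ, τ⟩, f, g⟩ hw
      rw [hT, Finset.mem_coe, Finset.mem_sigma, hS, Finset.mem_filter, Finset.mem_product] at hw
      obtain ⟨⟨-, hσ, hτ, hmul⟩, hf, hg⟩ := hw
      have hfb := (compSet_bounds hf).1
      show (⟨(canPerm n (fF n k (phiF n k σ f g)),
          (canPerm n (fF n k (phiF n k σ f g)))⁻¹ * π),
          (fF n k (phiF n k σ f g), gF n k (phiF n k σ f g))⟩ :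
          Σ _ : Equiv.Perm (Bset n) × Equiv.Perm (Bset n), (Fin n → ℤ) × (Fin n → ℤ))
        = ⟨(σ, τ), (f, g)⟩
      have e1 : canPerm n (fF n k (phiF n k σ f g)) = σ := canPerm_phiF hσ hf
      have e2 : fF n k (phiF n k σ f g) = f := fF_phiF hfb
      have e3 : gF n k (phiF n k σ f g) = g := gF_phiF hσ hf
      have e4 : σ⁻¹ * π = τ := by
        rw [← hmul]
        exact inv_mul_cancel_left σ τ
      rw [e1, e4, e2, e3]
  have hL := card_compSet n (2 * k * l + k + l) π hπ
  rw [← hL, hbij, hT, Finset.card_sigma]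
  apply Finset.sum_congr rfl
  intro p hp
  rw [hS, Finset.mem_filter] at hp
  obtain ⟨-, hσ, hτ, -⟩ := hp
  rw [Finset.card_product, card_compSet n k p.1 hσ, card_compSet n l p.2 hτ]
end
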